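/- arXiv:2512.01115 — 7 statements merged into one kernel-verified Lean document; each statement's English description precedes it below -/
import Mathlib

section
/- Let d ≥ 1 and α > 1, let P and Q be probability measures on ℝ^d, and let ω be a probability measure on the unit sphere S^{d−1} such that the map u ↦ D_α(Ψ^u_# P ‖ Ψ^u_# Q) is measurable. Then AveSD_α^ω(P‖Q) ≤ JSD_α^ω(P‖Q) ≤ D_α(P‖Q). -/
open MeasureTheory ProbabilityTheory Real
open scoped ENNReal NNReal RealInnerProductSpace BigOperators

noncomputable section

/-- `ℝ^d` with its Euclidean structure. -/
abbrev Euc (d : ℕ) := EuclideanSpace ℝ (Fin d)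

open Classical in
/-- Rényi divergence of order `α`: `(α-1)⁻¹ log ∫ (dP/dQ)^α dQ`, with value `∞` when
`P` is not absolutely continuous w.r.t. `Q` or the defining integral is infinite. -/
noncomputable def renyiDiv {Ω : Type*} [MeasurableSpace Ω] (α : ℝ) (P Q : Measure Ω) : ℝ≥0∞ :=
  if P ≪ Q ∧ ∫⁻ x, P.rnDeriv Q x ^ α ∂Q ≠ ∞ then
    ENNReal.ofReal ((α - 1)⁻¹ * Real.log (∫⁻ x, P.rnDeriv Q x ^ α ∂Q).toReal)
  else ∞

/-- extended exponential on `ℝ≥0∞`. -/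
noncomputable def eexp (x : ℝ≥0∞) : ℝ≥0∞ :=
  if x = ∞ then ∞ else ENNReal.ofReal (Real.exp x.toReal)

/-- extended logarithm on `ℝ≥0∞` (nonnegative part). -/
noncomputable def elog (x : ℝ≥0∞) : ℝ≥0∞ :=
  if x = ∞ then ∞ else ENNReal.ofReal (Real.log x.toReal)

/-- pushforward of a measure on `ℝ^d` under the projection `a ↦ ⟨a, u⟩`. -/
noncomputable def proj {d : ℕ} (u : Euc d) (P : Measure (Euc d)) : Measure ℝ :=
  P.map fun a => ⟪a, u⟫

/-- Average sliced Rényi divergence with slice profile `ω`. -/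
noncomputable def aveSD {d : ℕ} (α : ℝ) (ω : Measure (Euc d)) (P Q : Measure (Euc d)) : ℝ≥0∞ :=
  ∫⁻ u, renyiDiv α (proj u P) (proj u Q) ∂ω

/-- Joint sliced Rényi divergence with slice profile `ω`. -/
noncomputable def jsd {d : ℕ} (α : ℝ) (ω : Measure (Euc d)) (P Q : Measure (Euc d)) : ℝ≥0∞ :=
  ENNReal.ofReal ((α - 1)⁻¹) *
    elog (∫⁻ u, eexp (ENNReal.ofReal (α - 1) * renyiDiv α (proj u P) (proj u Q)) ∂ω)

/-- ∞-Wasserstein distance: infimum over couplings of the essential supremum of the distance. -/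
noncomputable def wInf {X : Type*} [MeasurableSpace X] [PseudoEMetricSpace X]
    (μ ν : Measure X) : ℝ≥0∞ :=
  ⨅ (cpl : Measure (X × X)) (_ : cpl.map Prod.fst = μ ∧ cpl.map Prod.snd = ν),
    essSup (fun p : X × X => edist p.1 p.2) cpl

/-- convolution of measures: the law of `X + N` for independent `X ∼ P`, `N ∼ ζ`. -/
noncomputable def mconv {G : Type*} [MeasurableSpace G] [Add G] (P ζ : Measure G) : Measure G :=
  (P.prod ζ).map fun p => p.1 + p.2

/-- the isotropic Gaussian measure `N(0, v·I_d)` on `ℝ^d`. -/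
noncomputable def isoGaussian (d : ℕ) (v : ℝ≥0) : Measure (Euc d) :=
  (Measure.pi fun _ : Fin d => gaussianReal 0 v).map
    (MeasurableEquiv.toLp 2 (Fin d → ℝ))

/-- approximate max-divergence `D_∞^δ`. -/
noncomputable def dInfDelta {Ω : Type*} [MeasurableSpace Ω] (δ : ℝ) (P Q : Measure Ω) : ℝ≥0∞ :=
  sInf {ε : ℝ≥0∞ | ∀ A : Set Ω, MeasurableSet A → P A ≤ eexp ε * Q A + ENNReal.ofReal δ}

end


section Helpers
open MeasureTheory Real
open scoped ENNReal NNReal RealInnerProductSpace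

lemma iSup_min_rpow (x : ℝ≥0∞) {a : ℝ} (ha : 1 ≤ a) :
    ⨆ n : ℕ, min x n ^ a = x ^ a := by
  have ha0 : (0:ℝ) ≤ a := by linarith
  apply le_antisymm
  · exact iSup_le fun n => ENNReal.rpow_le_rpow (min_le_left _ _) ha0
  · rcases eq_or_ne x ∞ with hx | hx
    · have hmin : ∀ n : ℕ, min x (n:ℝ≥0∞) = n := fun n => by
        simp [hx]
      have h1 : (⊤:ℝ≥0∞) ≤ ⨆ n : ℕ, min x n ^ a := by
        rw [← ENNReal.iSup_natCast]
        refine iSup_mono fun n => ?_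
        rw [hmin n]
        rcases Nat.eq_zero_or_pos n with h0 | h0
        · simp [h0]
        · have h1n : (1:ℝ≥0∞) ≤ n := by exact_mod_cast h0
          calc (n:ℝ≥0∞) = (n:ℝ≥0∞) ^ (1:ℝ) := (ENNReal.rpow_one _).symm
            _ ≤ (n:ℝ≥0∞) ^ a := ENNReal.rpow_le_rpow_of_exponent_le h1n ha
      exact le_trans (le_top) h1
    · set n := ⌈x.toReal⌉₊
      have hxn : x ≤ (n:ℝ≥0∞) := by
        rw [← ENNReal.ofReal_toReal hx, ← ENNReal.ofReal_natCast]
        exact ENNReal.ofReal_le_ofReal (Nat.le_ceil _)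
      have : min x (n:ℝ≥0∞) = x := min_eq_left hxn
      calc x ^ a = min x (n:ℝ≥0∞) ^ a := by rw [this]
        _ ≤ ⨆ m : ℕ, min x m ^ a := le_iSup (fun m : ℕ => min x (m:ℝ≥0∞) ^ a) n

lemma lintegral_rpow_rnDeriv_map_le {X Y : Type*} [MeasurableSpace X] [MeasurableSpace Y]
    {P Q : Measure X} [IsFiniteMeasure P] [IsFiniteMeasure Q] (hPQ : P ≪ Q)
    {T : X → Y} (hT : Measurable T) {α : ℝ} (hα : 1 < α) :
    ∫⁻ y, (P.map T).rnDeriv (Q.map T) y ^ α ∂(Q.map T) ≤ ∫⁻ x, P.rnDeriv Q x ^ α ∂Q := by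
  have hα0 : (0:ℝ) < α - 1 := by linarith
  set μ := P.map T with hμdef
  set ν := Q.map T with hνdef
  have hμν : μ ≪ ν := hPQ.map hT
  set h := μ.rnDeriv ν with hh
  have hmeas_h : Measurable h := μ.measurable_rnDeriv ν
  set f := P.rnDeriv Q with hf
  have hmeas_f : Measurable f := P.measurable_rnDeriv Q
  set B := ∫⁻ x, f x ^ α ∂Q with hB
  have hpq : (α / (α - 1)).HolderConjugate α :=
    (Real.HolderConjugate.conjExponent hα).symm
  have key : ∀ n : ℕ, ∫⁻ y, min (h y) n ^ α ∂ν ≤ B := by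
    intro n
    set A := ∫⁻ y, min (h y) n ^ α ∂ν with hA
    have hmeas_min : Measurable fun y => min (h y) (n:ℝ≥0∞) := hmeas_h.min measurable_const
    have hmeas_minT : Measurable fun x => min (h (T x)) (n:ℝ≥0∞) := hmeas_min.comp hT
    have hAfin : A ≠ ∞ := by
      have hle : A ≤ (n:ℝ≥0∞) ^ α * ν Set.univ := by
        rw [← lintegral_const]
        exact lintegral_mono fun y => ENNReal.rpow_le_rpow (min_le_right _ _) (by linarith)
      have : (n:ℝ≥0∞) ^ α * ν Set.univ ≠ ∞ :=
        ENNReal.mul_ne_top (ENNReal.rpow_ne_top_of_nonneg (by linarith) (by simp)) (measure_ne_top _ _)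
      exact ne_top_of_le_ne_top this hle
    have step1 : A ≤ ∫⁻ y, h y * min (h y) n ^ (α-1) ∂ν := by
      refine lintegral_mono fun y => ?_
      calc min (h y) n ^ α = min (h y) n ^ (1:ℝ) * min (h y) n ^ (α - 1) := by
            rw [← ENNReal.rpow_add_of_nonneg _ _ zero_le_one (by linarith)]
            norm_num
        _ ≤ h y * min (h y) n ^ (α-1) := by
            rw [ENNReal.rpow_one]
            exact mul_le_mul_left (min_le_left _ _) _
    have step2 : ∫⁻ y, h y * min (h y) n ^ (α-1) ∂ν
        = ∫⁻ x, min (h (T x)) n ^ (α-1) * f x ∂Q := by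
      rw [MeasureTheory.lintegral_rnDeriv_mul hμν ((hmeas_min.pow_const _).aemeasurable)]
      rw [hμdef, lintegral_map (hmeas_min.pow_const _) hT]
      rw [← MeasureTheory.lintegral_rnDeriv_mul hPQ ((hmeas_minT.pow_const _).aemeasurable)]
      exact lintegral_congr fun x => mul_comm _ _
    have step3 : ∫⁻ x, min (h (T x)) n ^ (α-1) * f x ∂Q
        ≤ A ^ ((α-1)/α) * B ^ (1/α) := by
      have hH := ENNReal.lintegral_mul_le_Lp_mul_Lq Q hpq
        ((hmeas_minT.pow_const (α-1)).aemeasurable) hmeas_f.aemeasurable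
      have e1 : ∫⁻ x, (min (h (T x)) n ^ (α-1)) ^ (α/(α-1)) ∂Q = A := by
        have : ∀ x : X, (min (h (T x)) n ^ (α-1)) ^ (α/(α-1)) = min (h (T x)) n ^ α := by
          intro x
          rw [← ENNReal.rpow_mul]
          congr 1
          field_simp
        simp_rw [this]
        rw [hA, hνdef, lintegral_map (hmeas_min.pow_const _) hT]
      have e2 : (1:ℝ) / (α/(α-1)) = (α-1)/α := by
        field_simp
      calc ∫⁻ x, min (h (T x)) n ^ (α-1) * f x ∂Q
          = ∫⁻ x, ((fun x => min (h (T x)) n ^ (α-1)) * f) x ∂Q := by rfl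
        _ ≤ (∫⁻ x, (min (h (T x)) n ^ (α-1)) ^ (α/(α-1)) ∂Q) ^ ((1:ℝ)/(α/(α-1)))
              * (∫⁻ x, f x ^ α ∂Q) ^ (1/α) := by rw [← e2] at *; exact hH
        _ = A ^ ((α-1)/α) * B ^ (1/α) := by rw [e1, e2]
    have hmain : A ≤ A ^ ((α-1)/α) * B ^ (1/α) :=
      le_trans step1 (le_of_le_of_eq (le_of_eq step2) rfl |>.trans step3)
    rcases eq_or_ne A 0 with hA0 | hA0
    · rw [hA0]; exact zero_le
    · have hr : (0:ℝ) < (α-1)/α := by positivity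
      have hs : (0:ℝ) < 1/α := by positivity
      have hsplit : A = A ^ ((α-1)/α) * A ^ ((1:ℝ)/α) := by
        rw [← ENNReal.rpow_add_of_nonneg _ _ hr.le hs.le]
        rw [show (α-1)/α + 1/α = 1 by field_simp; ring]
        rw [ENNReal.rpow_one]
      have hcancel : A ^ ((1:ℝ)/α) ≤ B ^ ((1:ℝ)/α) := by
        have hne0 : A ^ ((α-1)/α) ≠ 0 := by
          simp [ENNReal.rpow_eq_zero_iff, hA0, hAfin, hr]
        have hnetop : A ^ ((α-1)/α) ≠ ∞ := ENNReal.rpow_ne_top_of_nonneg hr.le hAfin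
        nth_rewrite 1 [hsplit] at hmain
        exact (ENNReal.mul_le_mul_iff_right hne0 hnetop).mp hmain
      have := ENNReal.rpow_le_rpow hcancel (le_of_lt (by positivity : (0:ℝ) < α))
      rwa [← ENNReal.rpow_mul, ← ENNReal.rpow_mul,
        show (1:ℝ)/α * α = 1 by field_simp, ENNReal.rpow_one, ENNReal.rpow_one] at this
  calc ∫⁻ y, h y ^ α ∂ν = ∫⁻ y, ⨆ n : ℕ, min (h y) n ^ α ∂ν := by
        refine lintegral_congr fun y => ?_
        rw [iSup_min_rpow _ hα.le]
    _ = ⨆ n : ℕ, ∫⁻ y, min (h y) n ^ α ∂ν := by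
        refine lintegral_iSup (fun n => (hmeas_h.min measurable_const).pow_const _) ?_
        intro n m hnm y
        exact ENNReal.rpow_le_rpow (min_le_min le_rfl (by exact_mod_cast hnm)) (by linarith)
    _ ≤ B := iSup_le key


lemma eexp_mono {x y : ℝ≥0∞} (h : x ≤ y) : eexp x ≤ eexp y := by
  unfold eexp
  rcases eq_or_ne y ∞ with hy | hy
  · simp [hy]
  · have hx : x ≠ ∞ := fun h' => hy (top_le_iff.mp (h' ▸ h))
    rw [if_neg hx, if_neg hy]
    exact ENNReal.ofReal_le_ofReal (Real.exp_le_exp.mpr (ENNReal.toReal_mono hy h))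

lemma elog_mono {x y : ℝ≥0∞} (h : x ≤ y) : elog x ≤ elog y := by
  unfold elog
  rcases eq_or_ne y ∞ with hy | hy
  · simp [hy]
  · have hx : x ≠ ∞ := fun h' => hy (top_le_iff.mp (h' ▸ h))
    rw [if_neg hx, if_neg hy]
    rcases eq_or_lt_of_le (ENNReal.toReal_nonneg : (0:ℝ) ≤ x.toReal) with hx0 | hx0
    · rw [← hx0, Real.log_zero, ENNReal.ofReal_zero]
      exact zero_le
    · exact ENNReal.ofReal_le_ofReal (Real.log_le_log hx0 (ENNReal.toReal_mono hy h))

lemma elog_eexp {x : ℝ≥0∞} (hx : x ≠ ∞) : elog (eexp x) = x := by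
  unfold eexp elog
  rw [if_neg hx, if_neg ENNReal.ofReal_ne_top,
    ENNReal.toReal_ofReal (Real.exp_nonneg _), Real.log_exp, ENNReal.ofReal_toReal hx]

lemma renyiDiv_map_le {X Y : Type*} [MeasurableSpace X] [MeasurableSpace Y]
    {α : ℝ} (hα : 1 < α) (P Q : Measure X) [IsProbabilityMeasure P] [IsProbabilityMeasure Q]
    {T : X → Y} (hT : Measurable T) :
    renyiDiv α (P.map T) (Q.map T) ≤ renyiDiv α P Q := by
  unfold renyiDiv
  by_cases hc : P ≪ Q ∧ ∫⁻ x, P.rnDeriv Q x ^ α ∂Q ≠ ∞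
  · obtain ⟨hPQ, hBfin⟩ := hc
    have hle := lintegral_rpow_rnDeriv_map_le hPQ hT hα
    have hAfin : ∫⁻ y, (P.map T).rnDeriv (Q.map T) y ^ α ∂(Q.map T) ≠ ∞ :=
      ne_top_of_le_ne_top hBfin hle
    rw [if_pos ⟨hPQ.map hT, hAfin⟩, if_pos ⟨hPQ, hBfin⟩]
    set A := ∫⁻ y, (P.map T).rnDeriv (Q.map T) y ^ α ∂(Q.map T)
    set B := ∫⁻ x, P.rnDeriv Q x ^ α ∂Q
    rcases le_or_gt (Real.log A.toReal) 0 with hlog | hlog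
    · rw [ENNReal.ofReal_of_nonpos (mul_nonpos_of_nonneg_of_nonpos (inv_nonneg.mpr (by linarith)) hlog)]
      exact zero_le
    · apply ENNReal.ofReal_le_ofReal
      apply mul_le_mul_of_nonneg_left _ (inv_nonneg.mpr (by linarith : (0:ℝ) ≤ α - 1))
      have hA0 : 0 < A.toReal := by
        by_contra hA0
        push_neg at hA0
        have : A.toReal = 0 := le_antisymm hA0 ENNReal.toReal_nonneg
        rw [this, Real.log_zero] at hlog
        exact lt_irrefl _ hlog
      exact Real.log_le_log hA0 (ENNReal.toReal_mono hBfin hle)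
  · rw [if_neg hc]
    exact le_top

end Helpers

/-- ordering of sliced Rényi divergences:
for `d ≥ 1`, `α > 1`, probability measures `P, Q` on `ℝ^d`, and a probability
measure `ω` supported on the unit sphere such that the per-slice Rényi divergence
is measurable in the direction, we have
`AveSD_α^ω(P‖Q) ≤ JSD_α^ω(P‖Q) ≤ D_α(P‖Q)`. -/
theorem ordering_aveSD_jsd_renyi {d : ℕ} (hd : 1 ≤ d) {α : ℝ} (hα : 1 < α)
    (P Q : Measure (Euc d)) [IsProbabilityMeasure P] [IsProbabilityMeasure Q]
    (ω : Measure (Euc d)) [IsProbabilityMeasure ω]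
    (hsupp : ∀ᵐ u ∂ω, ‖u‖ = 1)
    (hmeas : Measurable fun u : Euc d => renyiDiv α (proj u P) (proj u Q)) :
    aveSD α ω P Q ≤ jsd α ω P Q ∧ jsd α ω P Q ≤ renyiDiv α P Q := by
  have hα1 : (0:ℝ) < α - 1 := by linarith
  have hTmeas : ∀ u : Euc d, Measurable fun a : Euc d => ⟪a, u⟫ := fun u =>
    (continuous_id.inner continuous_const).measurable
  set g := fun u : Euc d => renyiDiv α (proj u P) (proj u Q) with hg
  set e := ENNReal.ofReal (α - 1) with he
  set c := ENNReal.ofReal ((α - 1)⁻¹) with hc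
  have he0 : e ≠ 0 := by
    simp only [he, ne_eq, ENNReal.ofReal_eq_zero, not_le]
    linarith
  have hc0 : c ≠ 0 := by
    simp only [hc, ne_eq, ENNReal.ofReal_eq_zero, not_le]
    positivity
  have hce : c * e = 1 := by
    rw [hc, he, ← ENNReal.ofReal_mul (inv_nonneg.mpr hα1.le),
      inv_mul_cancel₀ (by linarith : α - 1 ≠ 0), ENNReal.ofReal_one]
  set I := ∫⁻ u, eexp (e * g u) ∂ω with hI
  have hjsd : jsd α ω P Q = c * elog I := rfl
  have haved : aveSD α ω P Q = ∫⁻ u, g u ∂ω := rfl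
  constructor
  · -- aveSD ≤ jsd
    rw [haved, hjsd]
    rcases eq_or_ne I ∞ with hItop | hItop
    · rw [hItop, show elog ∞ = ∞ from if_pos rfl, ENNReal.mul_top hc0]
      exact le_top
    · -- g is a.e. finite
      have hS : ω {u | g u = ∞} = 0 := by
        by_contra hS
        apply hItop
        have hSm : MeasurableSet {u : Euc d | g u = ∞} := hmeas (measurableSet_singleton ∞)
        have h2 : ∫⁻ u in {u | g u = ∞}, eexp (e * g u) ∂ω = ∞ * ω {u | g u = ∞} := by
          rw [← setLIntegral_const]
          refine setLIntegral_congr_fun hSm (fun u hu => ?_)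
          rw [Set.mem_setOf_eq.mp hu, ENNReal.mul_top he0]
          rfl
        have h3 : (∞ : ℝ≥0∞) * ω {u | g u = ∞} = ∞ := ENNReal.top_mul hS
        refine top_le_iff.mp ?_
        calc (⊤:ℝ≥0∞) = ∫⁻ u in {u | g u = ∞}, eexp (e * g u) ∂ω := by rw [h2, h3]
          _ ≤ I := lintegral_mono' Measure.restrict_le_self le_rfl
      have hgfin : ∀ᵐ u ∂ω, g u ≠ ∞ := by
        rw [ae_iff]
        simpa using hS
      set G := fun u : Euc d => (g u).toReal with hG
      have hGmeas : Measurable G := hmeas.ennreal_toReal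
      have hGnn : ∀ u, 0 ≤ G u := fun u => ENNReal.toReal_nonneg
      set F := fun u : Euc d => Real.exp ((α - 1) * G u) with hF
      have hFmeas : Measurable F := (hGmeas.const_mul (α - 1)).exp
      have hkey : ∀ u : Euc d, g u ≠ ∞ → eexp (e * g u) = ENNReal.ofReal (F u) := by
        intro u hu
        have hmul : e * g u ≠ ∞ := ENNReal.mul_ne_top ENNReal.ofReal_ne_top hu
        rw [show eexp (e * g u) = ENNReal.ofReal (Real.exp (e * g u).toReal) from if_neg hmul]
        congr 1
        rw [ENNReal.toReal_mul, he, ENNReal.toReal_ofReal hα1.le]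
      have hIeq : I = ∫⁻ u, ENNReal.ofReal (F u) ∂ω := by
        refine lintegral_congr_ae ?_
        filter_upwards [hgfin] with u hu
        exact hkey u hu
      have hFint : Integrable F ω := by
        have h1 : Integrable (fun u => (ENNReal.ofReal (F u)).toReal) ω :=
          integrable_toReal_of_lintegral_ne_top
            (ENNReal.measurable_ofReal.comp hFmeas).aemeasurable (by rw [← hIeq]; exact hItop)
        refine h1.congr (Filter.Eventually.of_forall fun u => ?_)
        exact ENNReal.toReal_ofReal (Real.exp_nonneg _)
      have hGint : Integrable G ω := by
        have hbound : Integrable (fun u => (α - 1)⁻¹ * F u) ω := hFint.const_mul _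
        refine hbound.mono hGmeas.aestronglyMeasurable (Filter.Eventually.of_forall fun u => ?_)
        have h1 : (α - 1) * G u + 1 ≤ F u := Real.add_one_le_exp _
        have h2 : (α - 1) * G u ≤ F u := by linarith
        rw [Real.norm_eq_abs, Real.norm_eq_abs, abs_of_nonneg (hGnn u),
          abs_of_nonneg (by positivity : (0:ℝ) ≤ (α - 1)⁻¹ * F u)]
        calc G u = (α - 1)⁻¹ * ((α - 1) * G u) := by field_simp
          _ ≤ (α - 1)⁻¹ * F u := mul_le_mul_of_nonneg_left h2 (inv_nonneg.mpr hα1.le)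
      set t := ∫ u, G u ∂ω with ht
      set J := ∫ u, F u ∂ω with hJ
      have hJen : Real.exp ((α - 1) * t) ≤ J := by
        set m := (α - 1) * t with hm
        have pt : ∀ u, Real.exp m * ((α - 1) * G u - m + 1) ≤ F u := by
          intro u
          have h1 := Real.add_one_le_exp ((α - 1) * G u - m)
          have h2 : Real.exp m * ((α - 1) * G u - m + 1)
              ≤ Real.exp m * Real.exp ((α - 1) * G u - m) :=
            mul_le_mul_of_nonneg_left h1 (Real.exp_pos m).le
          calc Real.exp m * ((α - 1) * G u - m + 1)
              ≤ Real.exp m * Real.exp ((α - 1) * G u - m) := h2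
            _ = F u := by rw [← Real.exp_add]; simp only [hF]; congr 1; ring
        have hint1 : Integrable (fun u => Real.exp m * ((α - 1) * G u - m + 1)) ω := by
          apply Integrable.const_mul
          exact ((hGint.const_mul (α - 1)).sub (integrable_const m)).add (integrable_const 1)
        have hmono := integral_mono hint1 hFint pt
        have hcomp : ∫ u, Real.exp m * ((α - 1) * G u - m + 1) ∂ω = Real.exp m := by
          rw [integral_const_mul]
          have hint2 : Integrable (fun u => (α - 1) * G u - m) ω :=
            (hGint.const_mul (α - 1)).sub (integrable_const m)
          have : ∫ u, ((α - 1) * G u - m + 1) ∂ω = 1 := by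
            rw [integral_add hint2 (integrable_const 1),
              integral_sub (hGint.const_mul (α - 1)) (integrable_const m),
              MeasureTheory.integral_const_mul, integral_const, integral_const]
            simp only [measure_univ, probReal_univ, ENNReal.toReal_one, one_smul, smul_eq_mul, mul_one, hm, ht]
            ring
          rw [this, mul_one]
        rw [hcomp] at hmono
        exact hmono
      have hJpos : 0 < J := lt_of_lt_of_le (Real.exp_pos _) hJen
      have htJ : t ≤ (α - 1)⁻¹ * Real.log J := by
        have h1 : (α - 1) * t ≤ Real.log J := by
          rw [← Real.log_exp ((α - 1) * t)]
          exact Real.log_le_log (Real.exp_pos _) hJen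
        calc t = (α - 1)⁻¹ * ((α - 1) * t) := by field_simp
          _ ≤ (α - 1)⁻¹ * Real.log J := mul_le_mul_of_nonneg_left h1 (inv_nonneg.mpr hα1.le)
      have haveq : ∫⁻ u, g u ∂ω = ENNReal.ofReal t := by
        rw [ht, MeasureTheory.ofReal_integral_eq_lintegral_ofReal hGint
          (Filter.Eventually.of_forall hGnn)]
        refine lintegral_congr_ae ?_
        filter_upwards [hgfin] with u hu
        rw [hG, ENNReal.ofReal_toReal hu]
      have hIJ : I = ENNReal.ofReal J := by
        rw [hIeq, hJ, MeasureTheory.ofReal_integral_eq_lintegral_ofReal hFint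
          (Filter.Eventually.of_forall fun u => (Real.exp_nonneg _))]
      rw [haveq, hIJ]
      have helogJ : elog (ENNReal.ofReal J) = ENNReal.ofReal (Real.log J) := by
        rw [show elog (ENNReal.ofReal J)
            = ENNReal.ofReal (Real.log (ENNReal.ofReal J).toReal) from if_neg ENNReal.ofReal_ne_top,
          ENNReal.toReal_ofReal hJpos.le]
      rw [helogJ, hc, ← ENNReal.ofReal_mul (inv_nonneg.mpr hα1.le)]
      exact ENNReal.ofReal_le_ofReal htJ
  · -- jsd ≤ renyiDiv
    rw [hjsd]
    set D := renyiDiv α P Q with hD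
    rcases eq_or_ne D ∞ with hDtop | hDtop
    · rw [hDtop]; exact le_top
    · have hslice : ∀ u : Euc d, g u ≤ D := by
        intro u
        have : IsProbabilityMeasure (P.map fun a : Euc d => ⟪a, u⟫) :=
          Measure.isProbabilityMeasure_map (hTmeas u).aemeasurable
        exact renyiDiv_map_le hα P Q (hTmeas u)
      have hIle : I ≤ eexp (e * D) := by
        calc I ≤ ∫⁻ _, eexp (e * D) ∂ω :=
              lintegral_mono fun u => eexp_mono (mul_le_mul_right (hslice u) e)
          _ = eexp (e * D) := by rw [lintegral_const, measure_univ, mul_one]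
      have heD : e * D ≠ ∞ := ENNReal.mul_ne_top ENNReal.ofReal_ne_top hDtop
      calc c * elog I ≤ c * elog (eexp (e * D)) := mul_le_mul_right (elog_mono hIle) c
        _ = c * (e * D) := by rw [elog_eexp heD]
        _ = (c * e) * D := (mul_assoc _ _ _).symm
        _ = D := by rw [hce, one_mul]
end

section
/- Let α > 1, let P, Q and ζ be probability measures on ℝ^d, and let u ∈ S^{d−1}. Set z = W_∞(Ψ^u_# P, Ψ^u_# Q), the ∞-Wasserstein distance on ℝ with the absolute-value metric, and assume z < ∞. Then D_α( Ψ^u_#(P ∗ ζ) ‖ Ψ^u_#(Q ∗ ζ) ) ≤ sup_{|a| ≤ z} D_α( (Ψ^u_# ζ)_{−a} ‖ Ψ^u_# ζ ), where (Ψ^u_# ζ)_{−a} denotes the translate of the one-dimensional measure Ψ^u_# ζ by −a. -/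
open MeasureTheory ProbabilityTheory Real
open scoped ENNReal NNReal RealInnerProductSpace BigOperators

namespace SREaux

open Set Filter

/-! ### Pointwise Young-type inequality -/

lemma young0 {α : ℝ} (hα : 1 < α) (p h : ℝ≥0∞) :
    ENNReal.ofReal α * (p * h) ≤ p ^ α + ENNReal.ofReal (α - 1) * h ^ (α / (α - 1)) := by
  have hpq : α.HolderConjugate (α / (α - 1)) := Real.HolderConjugate.conjExponent hα
  have hy := ENNReal.young_inequality p h hpq
  have hα0 : (0:ℝ) < α := by linarith
  have hq0 : (0:ℝ) < α / (α - 1) := hpq.symm.pos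
  calc ENNReal.ofReal α * (p * h)
      ≤ ENNReal.ofReal α *
        (p ^ α / ENNReal.ofReal α + h ^ (α/(α-1)) / ENNReal.ofReal (α/(α-1))) :=
        mul_le_mul_right hy _
    _ = ENNReal.ofReal α * (p ^ α / ENNReal.ofReal α)
        + ENNReal.ofReal α * (h ^ (α/(α-1)) / ENNReal.ofReal (α/(α-1))) := mul_add _ _ _
    _ = p ^ α + ENNReal.ofReal (α - 1) * h ^ (α / (α - 1)) := by
        congr 1
        · exact ENNReal.mul_div_cancel' (fun h0 => absurd h0 (ENNReal.ofReal_pos.2 hα0).ne')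
            (fun h0 => absurd h0 ENNReal.ofReal_ne_top)
        · rw [show ENNReal.ofReal α * (h ^ (α/(α-1)) / ENNReal.ofReal (α/(α-1)))
              = h ^ (α/(α-1)) * (ENNReal.ofReal α / ENNReal.ofReal (α/(α-1))) by
            rw [div_eq_mul_inv, mul_left_comm, ← div_eq_mul_inv]]
          rw [← ENNReal.ofReal_div_of_pos hq0, hpq.div_conj_eq_sub_one, mul_comm]

/-! ### Upper bound for integrals against `μ` in terms of the Rényi integral -/

lemma renyi_young {α : ℝ} (hα : 1 < α) {μ ν : Measure ℝ} [MeasureTheory.SigmaFinite μ]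
    [MeasureTheory.SigmaFinite ν]
    (hac : μ ≪ ν) {h : ℝ → ℝ≥0∞} (hh : Measurable h) :
    ENNReal.ofReal α * ∫⁻ x, h x ∂μ ≤
      (∫⁻ x, μ.rnDeriv ν x ^ α ∂ν) + ENNReal.ofReal (α - 1) * ∫⁻ x, h x ^ (α / (α - 1)) ∂ν := by
  have hp : Measurable (μ.rnDeriv ν) := Measure.measurable_rnDeriv μ ν
  rw [← MeasureTheory.lintegral_rnDeriv_mul hac hh.aemeasurable,
    ← lintegral_const_mul _ (show Measurable fun x => μ.rnDeriv ν x * h x from hp.mul hh),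
    ← lintegral_const_mul _ (hh.pow_const _),
    ← lintegral_add_left (hp.pow_const _)]
  exact lintegral_mono fun x => young0 hα _ _

/-! ### Converse: bound on the Rényi integral from the family of inequalities -/

lemma renyi_of_forall_le {α : ℝ} (hα : 1 < α) {μ ν : Measure ℝ}
    [MeasureTheory.IsFiniteMeasure μ] [MeasureTheory.IsFiniteMeasure ν]
    {C : ℝ≥0∞} (hC : C ≠ ∞)
    (H : ∀ h : ℝ → ℝ≥0∞, Measurable h →
      ENNReal.ofReal α * ∫⁻ x, h x ∂μ
        ≤ C + ENNReal.ofReal (α - 1) * ∫⁻ x, h x ^ (α / (α - 1)) ∂ν) :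
    μ ≪ ν ∧ ∫⁻ x, μ.rnDeriv ν x ^ α ∂ν ≤ C := by
  have hq0 : (0:ℝ) < α / (α - 1) := div_pos (by linarith) (by linarith)
  have hac : μ ≪ ν := by
    refine Measure.AbsolutelyContinuous.mk fun s hs hνs => ?_
    have hmeas : Measurable (s.indicator fun _ : ℝ => (∞ : ℝ≥0∞)) :=
      measurable_const.indicator hs
    have h1 : ∫⁻ x, s.indicator (fun _ => (∞:ℝ≥0∞)) x ∂μ = ∞ * μ s :=
      lintegral_indicator_const hs _
    have h2 : ∫⁻ x, s.indicator (fun _ => (∞:ℝ≥0∞)) x ^ (α/(α-1)) ∂ν = 0 := by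
      have hpt : ∀ x, s.indicator (fun _ => (∞:ℝ≥0∞)) x ^ (α/(α-1))
          = s.indicator (fun _ => (∞:ℝ≥0∞)) x := by
        intro x
        by_cases hx : x ∈ s <;>
          simp [hx, ENNReal.top_rpow_of_pos hq0, ENNReal.zero_rpow_of_pos hq0]
      simp_rw [hpt]
      rw [lintegral_indicator_const hs, hνs, mul_zero]
    have hfull := H _ hmeas
    rw [h1, h2, mul_zero, add_zero] at hfull
    by_contra hμs
    rw [ENNReal.top_mul hμs, ENNReal.mul_top (ENNReal.ofReal_pos.2 (by linarith)).ne'] at hfull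
    exact hC (top_le_iff.mp hfull)
  refine ⟨hac, ?_⟩
  have hp : Measurable (μ.rnDeriv ν) := Measure.measurable_rnDeriv μ ν
  have hmeasn : ∀ n : ℕ, Measurable fun x => min (μ.rnDeriv ν x) (n:ℝ≥0∞) ^ α :=
    fun n => (hp.min measurable_const).pow_const _
  have hJle : ∀ n : ℕ, ∫⁻ x, min (μ.rnDeriv ν x) (n:ℝ≥0∞) ^ α ∂ν ≤ C := by
    intro n
    set f : ℝ → ℝ≥0∞ := fun x => min (μ.rnDeriv ν x) (n:ℝ≥0∞) ^ (α - 1) with hf_def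
    have hf : Measurable f := (hp.min measurable_const).pow_const _
    have hJfin : ∫⁻ x, min (μ.rnDeriv ν x) (n:ℝ≥0∞) ^ α ∂ν ≠ ∞ := by
      have hb : ∀ x, min (μ.rnDeriv ν x) (n:ℝ≥0∞) ^ α ≤ (n:ℝ≥0∞) ^ α := fun x =>
        ENNReal.rpow_le_rpow (min_le_right _ _) (by linarith)
      refine ne_of_lt (lt_of_le_of_lt (lintegral_mono hb) ?_)
      rw [lintegral_const]
      exact ENNReal.mul_lt_top
        (ENNReal.rpow_lt_top_of_nonneg (by linarith) (ENNReal.natCast_ne_top n))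
        (measure_lt_top ν _)
    have h1 : ∫⁻ x, min (μ.rnDeriv ν x) (n:ℝ≥0∞) ^ α ∂ν ≤ ∫⁻ x, f x ∂μ := by
      rw [← MeasureTheory.lintegral_rnDeriv_mul hac hf.aemeasurable]
      refine lintegral_mono fun x => ?_
      have hsum : (1:ℝ) + (α - 1) = α := by ring
      calc min (μ.rnDeriv ν x) (n:ℝ≥0∞) ^ α
          = min (μ.rnDeriv ν x) (n:ℝ≥0∞) ^ ((1:ℝ) + (α-1)) := by rw [hsum]
        _ = min (μ.rnDeriv ν x) (n:ℝ≥0∞) ^ (1:ℝ)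
            * min (μ.rnDeriv ν x) (n:ℝ≥0∞) ^ (α-1) :=
            ENNReal.rpow_add_of_nonneg _ _ zero_le_one (by linarith)
        _ = min (μ.rnDeriv ν x) (n:ℝ≥0∞) * f x := by rw [ENNReal.rpow_one]
        _ ≤ μ.rnDeriv ν x * f x := mul_le_mul_left (min_le_left _ _) _
    have h2 : ∫⁻ x, f x ^ (α/(α-1)) ∂ν = ∫⁻ x, min (μ.rnDeriv ν x) (n:ℝ≥0∞) ^ α ∂ν := by
      refine lintegral_congr fun x => ?_
      rw [hf_def, ← ENNReal.rpow_mul]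
      congr 1
      have hne : α - 1 ≠ 0 := by linarith
      field_simp
    have hH := H f hf
    rw [h2] at hH
    have key : ENNReal.ofReal α * ∫⁻ x, min (μ.rnDeriv ν x) (n:ℝ≥0∞) ^ α ∂ν
        ≤ C + ENNReal.ofReal (α - 1) * ∫⁻ x, min (μ.rnDeriv ν x) (n:ℝ≥0∞) ^ α ∂ν :=
      le_trans (mul_le_mul_right h1 _) hH
    have hsplit : ENNReal.ofReal α = ENNReal.ofReal (α - 1) + 1 := by
      rw [← ENNReal.ofReal_one, ← ENNReal.ofReal_add (by linarith) zero_le_one]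
      ring_nf
    rw [hsplit, add_mul, one_mul, add_comm C] at key
    have hfin : ENNReal.ofReal (α - 1) * ∫⁻ x, min (μ.rnDeriv ν x) (n:ℝ≥0∞) ^ α ∂ν ≠ ∞ :=
      ENNReal.mul_ne_top ENNReal.ofReal_ne_top hJfin
    exact (ENNReal.add_le_add_iff_left hfin).mp key
  have hpt : ∀ᵐ x ∂ν, μ.rnDeriv ν x ^ α
      = Filter.liminf (fun n : ℕ => min (μ.rnDeriv ν x) (n:ℝ≥0∞) ^ α) Filter.atTop := by
    filter_upwards [Measure.rnDeriv_lt_top μ ν] with x hx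
    obtain ⟨n₀, hn₀⟩ := ENNReal.exists_nat_gt hx.ne
    have hev : (fun n : ℕ => min (μ.rnDeriv ν x) (n:ℝ≥0∞) ^ α)
        =ᶠ[Filter.atTop] fun _ => μ.rnDeriv ν x ^ α := by
      filter_upwards [Filter.eventually_ge_atTop n₀] with mm hm
      rw [min_eq_left (le_trans hn₀.le (by exact_mod_cast Nat.cast_le.mpr hm))]
    rw [Filter.liminf_congr hev, Filter.liminf_const]
  calc ∫⁻ x, μ.rnDeriv ν x ^ α ∂ν
      = ∫⁻ x, Filter.liminf (fun n : ℕ => min (μ.rnDeriv ν x) (n:ℝ≥0∞) ^ α) Filter.atTop ∂ν :=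
        lintegral_congr_ae hpt
    _ ≤ Filter.liminf (fun n : ℕ => ∫⁻ x, min (μ.rnDeriv ν x) (n:ℝ≥0∞) ^ α ∂ν) Filter.atTop :=
        lintegral_liminf_le hmeasn
    _ ≤ C := Filter.liminf_le_of_frequently_le' (Filter.Frequently.of_forall hJle)

/-! ### Quantile function -/

noncomputable def qf (μ : Measure ℝ) (u : ℝ) : ℝ := sInf {x | u ≤ cdf μ x}

lemma qf_nonempty (μ : Measure ℝ) {u : ℝ} (hu : u < 1) : {x | u ≤ cdf μ x}.Nonempty := by
  have hev : ∀ᶠ x in Filter.atTop, u ≤ cdf μ x :=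
    (tendsto_cdf_atTop μ).eventually (eventually_ge_nhds hu)
  exact hev.exists

lemma qf_bddBelow (μ : Measure ℝ) {u : ℝ} (hu : 0 < u) : BddBelow {x | u ≤ cdf μ x} := by
  have hev : ∀ᶠ x in Filter.atBot, cdf μ x < u :=
    (tendsto_cdf_atBot μ).eventually (eventually_lt_nhds hu)
  obtain ⟨x₀, hx₀⟩ := hev.exists
  refine ⟨x₀, fun y hy => ?_⟩
  by_contra hxy
  push_neg at hxy
  exact absurd (le_trans hy (monotone_cdf μ hxy.le)) (not_le.mpr hx₀)

lemma qf_le_iff {μ : Measure ℝ} {u : ℝ} (hu : u ∈ Set.Ioo (0:ℝ) 1) (x : ℝ) :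
    qf μ u ≤ x ↔ u ≤ cdf μ x := by
  constructor
  · intro hqf
    have hall : ∀ y, x < y → u ≤ cdf μ y := by
      intro y hy
      obtain ⟨zz, hz, hzy⟩ := exists_lt_of_csInf_lt (qf_nonempty μ hu.2) (lt_of_le_of_lt hqf hy)
      exact le_trans hz (monotone_cdf μ hzy.le)
    have ht : Filter.Tendsto (cdf μ) (nhdsWithin x (Set.Ioi x)) (nhds (cdf μ x)) :=
      ((cdf μ).right_continuous x).tendsto.mono_left (nhdsWithin_mono x Set.Ioi_subset_Ici_self)
    exact ge_of_tendsto ht (Filter.eventually_of_mem self_mem_nhdsWithin fun y hy => hall y hy)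
  · intro hx
    exact csInf_le (qf_bddBelow μ hu.1) hx

lemma qf_monoOn {μ : Measure ℝ} : MonotoneOn (qf μ) (Set.Ioo (0:ℝ) 1) := by
  intro u hu v hv huv
  rw [qf_le_iff hu]
  exact le_trans huv ((qf_le_iff hv _).mp le_rfl)

lemma map_qf_aux {μ : Measure ℝ} [MeasureTheory.IsProbabilityMeasure μ] {g : ℝ → ℝ}
    (hg : Measurable g)
    (hgq : g =ᵐ[MeasureTheory.volume.restrict (Set.Ioo (0:ℝ) 1)] qf μ) :
    (MeasureTheory.volume.restrict (Set.Ioo (0:ℝ) 1)).map g = μ := by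
  haveI hPm : IsProbabilityMeasure (MeasureTheory.volume.restrict (Set.Ioo (0:ℝ) 1)) :=
    ⟨by simp [Real.volume_Ioo]⟩
  haveI : IsProbabilityMeasure ((MeasureTheory.volume.restrict (Set.Ioo (0:ℝ) 1)).map g) :=
    Measure.isProbabilityMeasure_map hg.aemeasurable
  refine Measure.ext_of_Iic _ _ fun x => ?_
  rw [Measure.map_apply hg measurableSet_Iic]
  have h1 : (MeasureTheory.volume.restrict (Set.Ioo (0:ℝ) 1)) (g ⁻¹' Set.Iic x)
      = (MeasureTheory.volume.restrict (Set.Ioo (0:ℝ) 1)) (qf μ ⁻¹' Set.Iic x) := by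
    refine measure_congr (Filter.eventuallyEq_set.mpr ?_)
    filter_upwards [hgq] with a ha
    simp [Set.mem_preimage, ha]
  rw [h1, Measure.restrict_apply' measurableSet_Ioo]
  have h2 : qf μ ⁻¹' Set.Iic x ∩ Set.Ioo 0 1 = Set.Iic (cdf μ x) ∩ Set.Ioo 0 1 := by
    ext s
    simp only [Set.mem_inter_iff, Set.mem_preimage, Set.mem_Iic]
    constructor
    · rintro ⟨h, hs⟩; exact ⟨(qf_le_iff hs x).mp h, hs⟩
    · rintro ⟨h, hs⟩; exact ⟨(qf_le_iff hs x).mpr h, hs⟩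
  rw [h2]
  have hc0 : 0 ≤ cdf μ x := cdf_nonneg μ x
  have hc1 : cdf μ x ≤ 1 := cdf_le_one μ x
  have hvol : MeasureTheory.volume (Set.Iic (cdf μ x) ∩ Set.Ioo 0 1)
      = ENNReal.ofReal (cdf μ x) := by
    rcases lt_or_eq_of_le hc1 with hlt | heq
    · have hset : Set.Iic (cdf μ x) ∩ Set.Ioo 0 1 = Set.Ioc 0 (cdf μ x) := by
        ext s
        simp only [Set.mem_inter_iff, Set.mem_Iic, Set.mem_Ioo, Set.mem_Ioc]
        constructor
        · rintro ⟨ha, hb, _⟩; exact ⟨hb, ha⟩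
        · rintro ⟨ha, hb⟩; exact ⟨hb, ha, lt_of_le_of_lt hb hlt⟩
      rw [hset, Real.volume_Ioc, sub_zero]
    · have hset : Set.Iic (cdf μ x) ∩ Set.Ioo 0 1 = Set.Ioo 0 1 := by
        rw [Set.inter_eq_right]
        intro s hs
        simp only [Set.mem_Iic]
        rw [heq]
        exact hs.2.le
      rw [hset, Real.volume_Ioo, sub_zero, ← heq]
  rw [hvol, ofReal_cdf]

lemma exists_quantile (μ : Measure ℝ) [MeasureTheory.IsProbabilityMeasure μ] :
    ∃ g : ℝ → ℝ, Measurable g ∧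
      (MeasureTheory.volume.restrict (Set.Ioo (0:ℝ) 1)).map g = μ ∧
      g =ᵐ[MeasureTheory.volume.restrict (Set.Ioo (0:ℝ) 1)] qf μ := by
  have ham : AEMeasurable (qf μ) (MeasureTheory.volume.restrict (Set.Ioo (0:ℝ) 1)) :=
    aemeasurable_restrict_of_monotoneOn measurableSet_Ioo qf_monoOn
  exact ⟨ham.mk _, ham.measurable_mk, map_qf_aux ham.measurable_mk ham.ae_eq_mk.symm,
    ham.ae_eq_mk.symm⟩

/-! ### CDF domination from `wInf` -/

lemma cdf_dom {μ ν : Measure ℝ} {B : ℝ} (hB : wInf μ ν < ENNReal.ofReal B) (t : ℝ) :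
    ν (Set.Iic (t - B)) ≤ μ (Set.Iic t) ∧ μ (Set.Iic (t - B)) ≤ ν (Set.Iic t) := by
  rw [wInf, iInf_lt_iff] at hB
  obtain ⟨cpl, hB⟩ := hB
  rw [iInf_lt_iff] at hB
  obtain ⟨⟨hfst, hsnd⟩, hess⟩ := hB
  have hae : ∀ᵐ p ∂cpl, |p.1 - p.2| ≤ B := by
    filter_upwards [ENNReal.ae_le_essSup (fun p : ℝ × ℝ => edist p.1 p.2)] with p hp
    have hlt : edist p.1 p.2 < ENNReal.ofReal B := lt_of_le_of_lt hp hess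
    rw [edist_dist] at hlt
    have hd := (ENNReal.ofReal_lt_ofReal_iff_of_nonneg dist_nonneg).mp hlt
    rw [Real.dist_eq] at hd
    exact hd.le
  constructor
  · rw [← hsnd, ← hfst, Measure.map_apply measurable_snd measurableSet_Iic,
      Measure.map_apply measurable_fst measurableSet_Iic]
    refine measure_mono_ae ?_
    filter_upwards [hae] with p hp hmem
    have hmem' : p.2 ≤ t - B := hmem
    have habs := abs_le.mp hp
    show p.1 ≤ t
    linarith [habs.1, habs.2]
  · rw [← hsnd, ← hfst, Measure.map_apply measurable_snd measurableSet_Iic,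
      Measure.map_apply measurable_fst measurableSet_Iic]
    refine measure_mono_ae ?_
    filter_upwards [hae] with p hp hmem
    have hmem' : p.1 ≤ t - B := hmem
    have habs := abs_le.mp hp
    show p.2 ≤ t
    linarith [habs.1, habs.2]

lemma qf_le_qf_add {μ ν : Measure ℝ} [MeasureTheory.IsProbabilityMeasure μ]
    [MeasureTheory.IsProbabilityMeasure ν] {w : ℝ≥0∞} (hw : w ≠ ∞)
    (hdom : ∀ B : ℝ, w < ENNReal.ofReal B → ∀ t, ν (Set.Iic (t - B)) ≤ μ (Set.Iic t))
    {u : ℝ} (hu : u ∈ Set.Ioo (0:ℝ) 1) :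
    qf μ u ≤ qf ν u + w.toReal := by
  have hz0 : 0 ≤ w.toReal := ENNReal.toReal_nonneg
  refine le_of_forall_gt_imp_ge_of_dense fun x hx => ?_
  rw [qf_le_iff hu]
  obtain ⟨y, hyS, hy⟩ := exists_lt_of_csInf_lt (qf_nonempty ν hu.2)
    (show qf ν u < x - w.toReal by linarith)
  have hBz : w < ENNReal.ofReal (x - y) := by
    rw [show w = ENNReal.ofReal w.toReal from (ENNReal.ofReal_toReal hw).symm]
    exact (ENNReal.ofReal_lt_ofReal_iff (by linarith)).mpr (by linarith)
  have hdom' := hdom (x - y) hBz x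
  rw [show x - (x - y) = y by ring] at hdom'
  calc u ≤ cdf ν y := hyS
    _ = (ν (Set.Iic y)).toReal := cdf_eq_real ν y
    _ ≤ (μ (Set.Iic x)).toReal := ENNReal.toReal_mono (measure_ne_top μ _) hdom'
    _ = cdf μ x := (cdf_eq_real μ x).symm

lemma abs_qf_sub_le {μ ν : Measure ℝ} [MeasureTheory.IsProbabilityMeasure μ]
    [MeasureTheory.IsProbabilityMeasure ν] (hz : wInf μ ν ≠ ∞)
    {u : ℝ} (hu : u ∈ Set.Ioo (0:ℝ) 1) :
    |qf μ u - qf ν u| ≤ (wInf μ ν).toReal := by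
  rw [abs_sub_le_iff]
  constructor
  · have h := qf_le_qf_add (μ := μ) (ν := ν) hz (fun B hB t => (cdf_dom hB t).1) hu
    linarith
  · have h := qf_le_qf_add (μ := ν) (ν := μ) hz (fun B hB t => (cdf_dom hB t).2) hu
    linarith

/-! ### Projection and convolution -/

lemma measurable_innerProj {d : ℕ} (u : Euc d) : Measurable fun a : Euc d => ⟪a, u⟫ :=
  (continuous_id.inner continuous_const).measurable

lemma isProb_proj {d : ℕ} (u : Euc d) (P : Measure (Euc d))
    [MeasureTheory.IsProbabilityMeasure P] : IsProbabilityMeasure (proj u P) :=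
  Measure.isProbabilityMeasure_map (measurable_innerProj u).aemeasurable

lemma isProb_mconv {d : ℕ} (P ζ : Measure (Euc d)) [MeasureTheory.IsProbabilityMeasure P]
    [MeasureTheory.IsProbabilityMeasure ζ] : IsProbabilityMeasure (mconv P ζ) :=
  Measure.isProbabilityMeasure_map (measurable_fst.add measurable_snd).aemeasurable

lemma proj_mconv {d : ℕ} (u : Euc d) (P ζ : Measure (Euc d))
    [MeasureTheory.IsProbabilityMeasure P] [MeasureTheory.IsProbabilityMeasure ζ] :
    proj u (mconv P ζ) = ((proj u P).prod (proj u ζ)).map fun p : ℝ × ℝ => p.1 + p.2 := by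
  rw [proj, proj, proj, mconv,
    Measure.map_prod_map _ _ (measurable_innerProj u) (measurable_innerProj u),
    Measure.map_map (show Measurable fun p : ℝ × ℝ => p.1 + p.2 from measurable_fst.add measurable_snd)
      ((measurable_innerProj u).prodMap (measurable_innerProj u)),
    Measure.map_map (measurable_innerProj u)
      (show Measurable fun p : Euc d × Euc d => p.1 + p.2 from measurable_fst.add measurable_snd)]
  congr 1
  funext p
  simp [Function.comp, inner_add_left]

lemma lintegral_rep {m μ1 mζ : Measure ℝ} [MeasureTheory.SFinite μ1] [MeasureTheory.SFinite mζ]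
    {g : ℝ → ℝ} (hg : Measurable g) (hmap : m.map g = μ1)
    {h : ℝ → ℝ≥0∞} (hh : Measurable h) :
    ∫⁻ x, h x ∂((μ1.prod mζ).map fun p : ℝ × ℝ => p.1 + p.2)
      = ∫⁻ s, ∫⁻ t, h (g s + t) ∂mζ ∂m := by
  subst hmap
  have hmbig : Measurable fun p : ℝ × ℝ => h (p.1 + p.2) :=
    hh.comp (measurable_fst.add measurable_snd)
  rw [lintegral_map hh (show Measurable fun p : ℝ × ℝ => p.1 + p.2 from measurable_fst.add measurable_snd),
    lintegral_prod (fun p : ℝ × ℝ => h (p.1 + p.2)) hmbig.aemeasurable,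
    lintegral_map hmbig.lintegral_prod_right' hg]

end SREaux


/-- per-slice Rényi envelope bound:
for `α > 1`, probability measures `P, Q, ζ` on `ℝ^d` and a unit direction `u`,
if `z = W_∞(Ψ^u_# P, Ψ^u_# Q) < ∞` then
`D_α(Ψ^u_#(P ∗ ζ) ‖ Ψ^u_#(Q ∗ ζ)) ≤ sup_{|a| ≤ z} D_α((Ψ^u_# ζ)_{-a} ‖ Ψ^u_# ζ)`. -/
theorem slice_renyi_envelope {d : ℕ} {α : ℝ} (hα : 1 < α)
    (P Q ζ : Measure (Euc d)) [IsProbabilityMeasure P] [IsProbabilityMeasure Q]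
    [IsProbabilityMeasure ζ]
    (u : Euc d) (hu : ‖u‖ = 1)
    (hz : wInf (proj u P) (proj u Q) ≠ ∞) :
    renyiDiv α (proj u (mconv P ζ)) (proj u (mconv Q ζ)) ≤
      ⨆ (a : ℝ) (_ : |a| ≤ (wInf (proj u P) (proj u Q)).toReal),
        renyiDiv α ((proj u ζ).map fun x => x - a) (proj u ζ) := by
  classical
  haveI : IsProbabilityMeasure (proj u P) := SREaux.isProb_proj u P
  haveI : IsProbabilityMeasure (proj u Q) := SREaux.isProb_proj u Q
  haveI : IsProbabilityMeasure (proj u ζ) := SREaux.isProb_proj u ζ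
  haveI : IsProbabilityMeasure (mconv P ζ) := SREaux.isProb_mconv P ζ
  haveI : IsProbabilityMeasure (mconv Q ζ) := SREaux.isProb_mconv Q ζ
  haveI : IsProbabilityMeasure (proj u (mconv P ζ)) := SREaux.isProb_proj u _
  haveI : IsProbabilityMeasure (proj u (mconv Q ζ)) := SREaux.isProb_proj u _
  set S := ⨆ (a : ℝ) (_ : |a| ≤ (wInf (proj u P) (proj u Q)).toReal),
      renyiDiv α ((proj u ζ).map fun x => x - a) (proj u ζ) with hSdef
  by_cases hS : S = ∞
  · rw [hS]; exact le_top
  set C := max 1 (ENNReal.ofReal (Real.exp ((α - 1) * S.toReal))) with hCdef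
  have hCne : C ≠ ∞ := by
    rw [hCdef]
    exact (max_lt ENNReal.one_lt_top ENNReal.ofReal_lt_top).ne
  -- step 1: every admissible shift has controlled Rényi integral
  have key_a : ∀ a : ℝ, |a| ≤ (wInf (proj u P) (proj u Q)).toReal →
      ((proj u ζ).map fun x => x - a) ≪ proj u ζ ∧
        ∫⁻ x, (((proj u ζ).map fun x => x - a).rnDeriv (proj u ζ) x) ^ α ∂(proj u ζ) ≤ C := by
    intro a ha
    have hle : renyiDiv α ((proj u ζ).map fun x => x - a) (proj u ζ) ≤ S := by
      rw [hSdef]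
      exact le_iSup₂ (f := fun (a : ℝ) (_ : |a| ≤ (wInf (proj u P) (proj u Q)).toReal) =>
        renyiDiv α ((proj u ζ).map fun x => x - a) (proj u ζ)) a ha
    by_cases hcond : ((proj u ζ).map fun x => x - a) ≪ proj u ζ ∧
        ∫⁻ x, (((proj u ζ).map fun x => x - a).rnDeriv (proj u ζ) x) ^ α ∂(proj u ζ) ≠ ∞
    · refine ⟨hcond.1, ?_⟩
      rw [renyiDiv, if_pos hcond] at hle
      set I := ∫⁻ x, (((proj u ζ).map fun x => x - a).rnDeriv (proj u ζ) x) ^ α ∂(proj u ζ)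
        with hIdef
      rcases le_or_gt I 1 with h1 | h1
      · exact le_trans h1 (le_max_left _ _)
      · have hIne : I ≠ ∞ := hcond.2
        have hIt : 1 < I.toReal := by
          rw [← ENNReal.toReal_one]
          exact (ENNReal.toReal_lt_toReal ENNReal.one_ne_top hIne).mpr h1
        have hval : (α - 1)⁻¹ * Real.log I.toReal ≤ S.toReal :=
          (ENNReal.ofReal_le_iff_le_toReal hS).mp hle
        have hlog : Real.log I.toReal ≤ (α - 1) * S.toReal := by
          have h2 := mul_le_mul_of_nonneg_left hval (by linarith : (0:ℝ) ≤ α - 1)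
          rwa [← mul_assoc, mul_inv_cancel₀ (by linarith : α - 1 ≠ 0), one_mul] at h2
        have hexp : I.toReal ≤ Real.exp ((α - 1) * S.toReal) := by
          calc I.toReal = Real.exp (Real.log I.toReal) := (Real.exp_log (by linarith)).symm
            _ ≤ Real.exp ((α - 1) * S.toReal) := Real.exp_le_exp.mpr hlog
        calc I = ENNReal.ofReal I.toReal := (ENNReal.ofReal_toReal hIne).symm
          _ ≤ ENNReal.ofReal (Real.exp ((α - 1) * S.toReal)) := ENNReal.ofReal_le_ofReal hexp
          _ ≤ C := by rw [hCdef]; exact le_max_right _ _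
    · rw [renyiDiv, if_neg hcond] at hle
      exact absurd (top_le_iff.mp hle) hS
  -- step 2: quantile couplings
  haveI hPm : IsProbabilityMeasure (volume.restrict (Set.Ioo (0:ℝ) 1)) :=
    ⟨by simp [Real.volume_Ioo]⟩
  obtain ⟨gP, hgP, hgPmap, hgPae⟩ := SREaux.exists_quantile (proj u P)
  obtain ⟨gQ, hgQ, hgQmap, hgQae⟩ := SREaux.exists_quantile (proj u Q)
  have hclose : ∀ᵐ s ∂(volume.restrict (Set.Ioo (0:ℝ) 1)),
      |gP s - gQ s| ≤ (wInf (proj u P) (proj u Q)).toReal := by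
    filter_upwards [hgPae, hgQae, ae_restrict_mem measurableSet_Ioo] with s h1 h2 h3
    rw [h1, h2]
    exact SREaux.abs_qf_sub_le hz h3
  -- step 3: the family of inequalities for the convolved and projected measures
  have main : ∀ h : ℝ → ℝ≥0∞, Measurable h →
      ENNReal.ofReal α * ∫⁻ x, h x ∂(proj u (mconv P ζ)) ≤
        C + ENNReal.ofReal (α - 1) * ∫⁻ x, h x ^ (α / (α - 1)) ∂(proj u (mconv Q ζ)) := by
    intro h hh
    rw [SREaux.proj_mconv u P ζ, SREaux.proj_mconv u Q ζ,
      SREaux.lintegral_rep hgP hgPmap hh,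
      SREaux.lintegral_rep hgQ hgQmap (hh.pow_const (α / (α - 1)))]
    have hmeasP : Measurable fun p : ℝ × ℝ => h (gP p.1 + p.2) :=
      hh.comp ((hgP.comp measurable_fst).add measurable_snd)
    have hmeasQ : Measurable fun p : ℝ × ℝ => h (gQ p.1 + p.2) ^ (α / (α - 1)) :=
      (hh.comp ((hgQ.comp measurable_fst).add measurable_snd)).pow_const _
    rw [← lintegral_const_mul _ hmeasP.lintegral_prod_right',
      ← lintegral_const_mul _ hmeasQ.lintegral_prod_right']
    have hpt : ∀ᵐ s ∂(volume.restrict (Set.Ioo (0:ℝ) 1)),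
        ENNReal.ofReal α * ∫⁻ t, h (gP s + t) ∂(proj u ζ) ≤
          C + ENNReal.ofReal (α - 1) * ∫⁻ t, h (gQ s + t) ^ (α / (α - 1)) ∂(proj u ζ) := by
      filter_upwards [hclose] with s hs
      have ha : |gQ s - gP s| ≤ (wInf (proj u P) (proj u Q)).toReal := by
        rw [abs_sub_comm]; exact hs
      obtain ⟨hac, hI⟩ := key_a (gQ s - gP s) ha
      haveI : IsProbabilityMeasure ((proj u ζ).map fun x => x - (gQ s - gP s)) :=
        Measure.isProbabilityMeasure_map
          (show Measurable fun x : ℝ => x - (gQ s - gP s) from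
            measurable_id.sub measurable_const).aemeasurable
      have hmapint : ∫⁻ t, h (gQ s + t) ∂((proj u ζ).map fun x => x - (gQ s - gP s))
          = ∫⁻ t, h (gP s + t) ∂(proj u ζ) := by
        rw [lintegral_map
          (show Measurable fun t : ℝ => h (gQ s + t) from
            hh.comp (measurable_const.add measurable_id))
          (show Measurable fun x : ℝ => x - (gQ s - gP s) from
            measurable_id.sub measurable_const)]
        refine lintegral_congr fun t => ?_
        congr 1
        ring
      calc ENNReal.ofReal α * ∫⁻ t, h (gP s + t) ∂(proj u ζ)
          = ENNReal.ofReal α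
            * ∫⁻ t, h (gQ s + t) ∂((proj u ζ).map fun x => x - (gQ s - gP s)) := by
            rw [hmapint]
        _ ≤ (∫⁻ x, (((proj u ζ).map fun x => x - (gQ s - gP s)).rnDeriv (proj u ζ) x) ^ α
              ∂(proj u ζ))
            + ENNReal.ofReal (α - 1) * ∫⁻ t, h (gQ s + t) ^ (α / (α - 1)) ∂(proj u ζ) :=
            SREaux.renyi_young hα hac
              (show Measurable fun t : ℝ => h (gQ s + t) from
                hh.comp (measurable_const.add measurable_id))
        _ ≤ C + ENNReal.ofReal (α - 1) * ∫⁻ t, h (gQ s + t) ^ (α / (α - 1)) ∂(proj u ζ) :=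
            add_le_add_left hI _
    calc ∫⁻ s, ENNReal.ofReal α * ∫⁻ t, h (gP s + t) ∂(proj u ζ)
          ∂(volume.restrict (Set.Ioo (0:ℝ) 1))
        ≤ ∫⁻ s, (C + ENNReal.ofReal (α - 1)
            * ∫⁻ t, h (gQ s + t) ^ (α / (α - 1)) ∂(proj u ζ))
          ∂(volume.restrict (Set.Ioo (0:ℝ) 1)) := lintegral_mono_ae hpt
      _ = C + ∫⁻ s, ENNReal.ofReal (α - 1)
            * ∫⁻ t, h (gQ s + t) ^ (α / (α - 1)) ∂(proj u ζ)
          ∂(volume.restrict (Set.Ioo (0:ℝ) 1)) := by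
          rw [lintegral_add_left measurable_const, lintegral_const, measure_univ, mul_one]
  -- step 4: conclude
  obtain ⟨hacbar, hIbar⟩ := SREaux.renyi_of_forall_le hα hCne main
  have hIfin : ∫⁻ x, ((proj u (mconv P ζ)).rnDeriv (proj u (mconv Q ζ)) x) ^ α
      ∂(proj u (mconv Q ζ)) ≠ ∞ := (lt_of_le_of_lt hIbar hCne.lt_top).ne
  rw [renyiDiv, if_pos ⟨hacbar, hIfin⟩]
  set I := ∫⁻ x, ((proj u (mconv P ζ)).rnDeriv (proj u (mconv Q ζ)) x) ^ α
      ∂(proj u (mconv Q ζ)) with hIdef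
  rcases le_or_gt I 1 with h1 | h1
  · have hle1 : I.toReal ≤ 1 := by
      calc I.toReal ≤ (1:ℝ≥0∞).toReal := ENNReal.toReal_mono ENNReal.one_ne_top h1
        _ = 1 := ENNReal.toReal_one
    have hlog : Real.log I.toReal ≤ 0 := Real.log_nonpos ENNReal.toReal_nonneg hle1
    have hnp : (α - 1)⁻¹ * Real.log I.toReal ≤ 0 :=
      mul_nonpos_of_nonneg_of_nonpos (inv_nonneg.mpr (by linarith)) hlog
    exact le_trans (le_of_eq (ENNReal.ofReal_eq_zero.mpr hnp)) zero_le
  · rw [hCdef] at hIbar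
    have hIE : I ≤ ENNReal.ofReal (Real.exp ((α - 1) * S.toReal)) := by
      rcases le_max_iff.mp hIbar with hbad | hgood
      · exact absurd hbad (not_le.mpr h1)
      · exact hgood
    have hItoReal : I.toReal ≤ Real.exp ((α - 1) * S.toReal) :=
      ENNReal.toReal_le_of_le_ofReal (Real.exp_pos _).le hIE
    have hIt0 : 0 < I.toReal := by
      have h1' : (1:ℝ) < I.toReal := by
        rw [← ENNReal.toReal_one]
        exact (ENNReal.toReal_lt_toReal ENNReal.one_ne_top hIfin).mpr h1
      linarith
    have hlog : Real.log I.toReal ≤ (α - 1) * S.toReal := by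
      calc Real.log I.toReal ≤ Real.log (Real.exp ((α - 1) * S.toReal)) :=
            Real.log_le_log hIt0 hItoReal
        _ = (α - 1) * S.toReal := Real.log_exp _
    have hfinal : (α - 1)⁻¹ * Real.log I.toReal ≤ S.toReal := by
      have h2 := mul_le_mul_of_nonneg_left hlog (inv_nonneg.mpr (by linarith : (0:ℝ) ≤ α - 1))
      rwa [← mul_assoc, inv_mul_cancel₀ (by linarith : α - 1 ≠ 0), one_mul] at h2
    calc ENNReal.ofReal ((α - 1)⁻¹ * Real.log I.toReal)
        ≤ ENNReal.ofReal S.toReal := ENNReal.ofReal_le_ofReal hfinal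
      _ = S := ENNReal.ofReal_toReal hS
end

section
/- Let α > 1, d ≥ 1, u ∈ S^{d−1}, h ≥ 0 and v > 0. Let (S, ν) be a probability space and m, m' : S → ℝ^d measurable maps with |⟨m(s) − m'(s), u⟩|² ≤ h for ν-almost every s. Let W be a real random variable with law N(0, v), independent of S ∼ ν (e.g. W = ⟨N, u⟩ for Gaussian noise N ∼ N(0, Σ) on ℝ^d with v = uᵀΣu > 0). Then D_α( law of (⟨m(S), u⟩ + W) ‖ law of (⟨m'(S), u⟩ + W) ) ≤ (α/2)·(h/v). -/
open MeasureTheory ProbabilityTheory Real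
open scoped ENNReal NNReal RealInnerProductSpace BigOperators

-- joint measurability of gaussianPDF in mean
lemma meas_pdf {S : Type*} [MeasurableSpace S] {c : S → ℝ} (hc : Measurable c) (v : ℝ≥0) :
    Measurable (fun p : S × ℝ => gaussianPDF (c p.1) v p.2) := by
  unfold gaussianPDF gaussianPDFReal
  fun_prop

lemma meas_pdf_left {S : Type*} [MeasurableSpace S] {c : S → ℝ} (hc : Measurable c) (v : ℝ≥0)
    (x : ℝ) : Measurable fun s => gaussianPDF (c s) v x := by
  unfold gaussianPDF gaussianPDFReal
  fun_prop

lemma meas_mix {S : Type*} [MeasurableSpace S] (ν : Measure S) [SFinite ν] {c : S → ℝ}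
    (hc : Measurable c) (v : ℝ≥0) :
    Measurable fun x => ∫⁻ s, gaussianPDF (c s) v x ∂ν :=
  ((meas_pdf hc v).comp measurable_swap).lintegral_prod_right'

lemma mixture_density {S : Type*} [MeasurableSpace S] (ν : Measure S) [SFinite ν]
    {c : S → ℝ} (hc : Measurable c) {v : ℝ≥0} (hv : v ≠ 0) :
    (ν.prod (gaussianReal 0 v)).map (fun p => c p.1 + p.2)
      = volume.withDensity (fun x => ∫⁻ s, gaussianPDF (c s) v x ∂ν) := by
  ext A hA
  rw [Measure.map_apply (by fun_prop) hA, Measure.prod_apply (hA.preimage (by fun_prop)),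
    withDensity_apply _ hA]
  have : ∀ s, (gaussianReal 0 v) (Prod.mk s ⁻¹' ((fun p : S × ℝ => c p.1 + p.2) ⁻¹' A))
      = ∫⁻ x in A, gaussianPDF (c s) v x := by
    intro s
    have h1 : (Prod.mk s ⁻¹' ((fun p : S × ℝ => c p.1 + p.2) ⁻¹' A)) = (c s + ·) ⁻¹' A := rfl
    rw [h1, ← Measure.map_apply (by fun_prop) hA, gaussianReal_map_const_add,
      zero_add, gaussianReal_apply _ hv]
  simp_rw [this]
  exact lintegral_lintegral_swap ((meas_pdf hc v).aemeasurable)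

lemma gauss_prod (a b α : ℝ) {v : ℝ≥0} (hv : v ≠ 0) (x : ℝ) :
    gaussianPDFReal a v x ^ α * gaussianPDFReal b v x ^ (1-α)
      = Real.exp (α*(α-1)*(a-b)^2/(2*v)) * gaussianPDFReal (α*a+(1-α)*b) v x := by
  have hvpos : (0:ℝ) < v := by positivity
  unfold gaussianPDFReal
  have hK : (0:ℝ) < (Real.sqrt (2*π*v))⁻¹ := by positivity
  rw [Real.mul_rpow hK.le (Real.exp_pos _).le, Real.mul_rpow hK.le (Real.exp_pos _).le,
    ← Real.exp_mul, ← Real.exp_mul]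
  have hKpow : (Real.sqrt (2*π*v))⁻¹ ^ α * (Real.sqrt (2*π*v))⁻¹ ^ (1-α)
      = (Real.sqrt (2*π*v))⁻¹ := by
    rw [← Real.rpow_add hK]; ring_nf; exact Real.rpow_one _
  calc (Real.sqrt (2*π*v))⁻¹ ^ α * Real.exp (-(x - a)^2 / (2*v) * α) *
        ((Real.sqrt (2*π*v))⁻¹ ^ (1-α) * Real.exp (-(x - b)^2 / (2*v) * (1-α)))
      = ((Real.sqrt (2*π*v))⁻¹ ^ α * (Real.sqrt (2*π*v))⁻¹ ^ (1-α)) *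
        Real.exp (-(x - a)^2 / (2*v) * α + -(x - b)^2 / (2*v) * (1-α)) := by
        rw [Real.exp_add]; ring
    _ = _ := by
        rw [hKpow]
        have : -(x - a)^2 / (2*v) * α + -(x - b)^2 / (2*v) * (1-α)
            = α*(α-1)*(a-b)^2/(2*v) + -(x - (α*a+(1-α)*b))^2 / (2*v) := by
          field_simp
          ring
        rw [this, Real.exp_add]
        ring

lemma gauss_renyi_integral (a b : ℝ) {v : ℝ≥0} (hv : v ≠ 0) {α : ℝ} (hα : 1 < α) :
    ∫⁻ x, gaussianPDF a v x ^ α * gaussianPDF b v x ^ (1-α)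
      = ENNReal.ofReal (Real.exp (α*(α-1)*(a-b)^2/(2*(v:ℝ)))) := by
  have h : ∀ x, gaussianPDF a v x ^ α * gaussianPDF b v x ^ (1-α)
      = ENNReal.ofReal (Real.exp (α*(α-1)*(a-b)^2/(2*(v:ℝ))))
        * gaussianPDF (α*a+(1-α)*b) v x := by
    intro x
    unfold gaussianPDF
    rw [ENNReal.ofReal_rpow_of_pos (gaussianPDFReal_pos _ _ _ hv),
      ENNReal.ofReal_rpow_of_pos (gaussianPDFReal_pos _ _ _ hv),
      ← ENNReal.ofReal_mul (Real.rpow_nonneg (gaussianPDFReal_nonneg _ _ _) _), gauss_prod a b α hv x,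
      ENNReal.ofReal_mul (Real.exp_nonneg _)]
  simp_rw [h]
  rw [lintegral_const_mul _ (measurable_gaussianPDF _ _), lintegral_gaussianPDF_eq_one _ hv,
    mul_one]

lemma holder_step {S : Type*} [MeasurableSpace S] (ν : Measure S) {f g : S → ℝ≥0∞}
    (hf : AEMeasurable f ν) (hg : AEMeasurable g ν) {α : ℝ} (hα : 1 < α)
    (hft : ∀ s, f s ≠ ∞) (hg0 : ∀ s, g s ≠ 0) (hgt : ∀ s, g s ≠ ∞) :
    ∫⁻ s, f s ∂ν ≤ (∫⁻ s, f s ^ α * g s ^ (1-α) ∂ν) ^ (1/α) * (∫⁻ s, g s ∂ν) ^ ((α-1)/α) := by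
  have hα0 : (0:ℝ) < α := by linarith
  have hα1 : α - 1 ≠ 0 := by linarith
  have hconj : α.HolderConjugate (α/(α-1)) := Real.HolderConjugate.conjExponent hα
  set F : S → ℝ≥0∞ := fun s => f s * g s ^ ((1-α)/α) with hF
  set G : S → ℝ≥0∞ := fun s => g s ^ ((α-1)/α) with hG
  have hFG : ∀ s, F s * G s = f s := by
    intro s
    rw [hF, hG]
    simp only
    rw [mul_assoc, ← ENNReal.rpow_add _ _ (hg0 s) (hgt s)]
    have : (1-α)/α + (α-1)/α = 0 := by ring
    rw [this, ENNReal.rpow_zero, mul_one]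
  have hGm : AEMeasurable G ν :=
    (ENNReal.continuous_rpow_const.measurable.comp_aemeasurable hg)
  have hFm : AEMeasurable F ν :=
    hf.mul (ENNReal.continuous_rpow_const.measurable.comp_aemeasurable hg)
  have key := ENNReal.lintegral_mul_le_Lp_mul_Lq ν hconj hFm hGm
  simp only [Pi.mul_apply] at key
  have e1 : ∀ s, F s ^ α = f s ^ α * g s ^ (1-α) := by
    intro s
    rw [hF]
    simp only
    rw [ENNReal.mul_rpow_of_ne_top (hft s) (by simp [ENNReal.rpow_eq_top_iff, hg0 s, hgt s]),
      ← ENNReal.rpow_mul]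
    congr 1
    field_simp
  have e2 : ∀ s, G s ^ (α/(α-1)) = g s := by
    intro s
    rw [hG]
    simp only
    rw [← ENNReal.rpow_mul]
    have : (α-1)/α * (α/(α-1)) = 1 := by field_simp
    rw [this, ENNReal.rpow_one]
  calc ∫⁻ s, f s ∂ν = ∫⁻ s, F s * G s ∂ν := by simp_rw [hFG]
    _ ≤ (∫⁻ s, F s ^ α ∂ν) ^ (1/α) * (∫⁻ s, G s ^ (α/(α-1)) ∂ν) ^ (1/(α/(α-1))) := key
    _ = _ := by
        simp_rw [e1, e2]
        congr 2
        rw [one_div_div]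

set_option maxHeartbeats 2000000 in
lemma main_aux {S : Type*} [MeasurableSpace S] (ν : Measure S) [IsProbabilityMeasure ν]
    {α h v : ℝ} (hα : 1 < α) (hh : 0 ≤ h) (hv : 0 < v) {v' : ℝ≥0} (hv' : v' ≠ 0)
    (hvv : (v' : ℝ) = v) {a b : S → ℝ} (ha : Measurable a) (hb : Measurable b)
    (hbound : ∀ᵐ s ∂ν, (a s - b s)^2 ≤ h) :
    renyiDiv α
      ((ν.prod (gaussianReal 0 v')).map fun p => a p.1 + p.2)
      ((ν.prod (gaussianReal 0 v')).map fun p => b p.1 + p.2)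
      ≤ ENNReal.ofReal (α / 2 * (h / v)) := by
  have hα0 : (0:ℝ) < α := by linarith
  have hα1 : α - 1 ≠ 0 := by linarith
  set p : ℝ → ℝ≥0∞ := fun x => ∫⁻ s, gaussianPDF (a s) v' x ∂ν with hpdef
  set q : ℝ → ℝ≥0∞ := fun x => ∫⁻ s, gaussianPDF (b s) v' x ∂ν with hqdef
  have hpm : Measurable p := meas_mix ν ha v'
  have hqm : Measurable q := meas_mix ν hb v'
  have e1 : ((ν.prod (gaussianReal 0 v')).map fun pr => a pr.1 + pr.2)
      = volume.withDensity p := mixture_density ν ha hv'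
  have e2 : ((ν.prod (gaussianReal 0 v')).map fun pr => b pr.1 + pr.2)
      = volume.withDensity q := mixture_density ν hb hv'
  rw [e1, e2]
  -- basic properties of q
  have hq0 : ∀ x, q x ≠ 0 := by
    intro x
    have hmeas : Measurable fun s => gaussianPDF (b s) v' x := meas_pdf_left hb v' x
    have : 0 < ∫⁻ s, gaussianPDF (b s) v' x ∂ν := by
      rw [lintegral_pos_iff_support hmeas]
      have hsupp : Function.support (fun s => gaussianPDF (b s) v' x) = Set.univ := by
        ext s
        simp [Function.support, (gaussianPDF_pos _ hv' x).ne']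
      rw [hsupp]
      simp
    exact this.ne'
  haveI hQprob : IsProbabilityMeasure (volume.withDensity q) := by
    rw [← e2]
    exact Measure.isProbabilityMeasure_map (by fun_prop)
  have hq_int : ∫⁻ x, q x ∂volume = 1 := by
    rw [← setLIntegral_univ, ← withDensity_apply _ MeasurableSet.univ]
    exact measure_univ
  have hqt : ∀ᵐ x ∂(volume : Measure ℝ), q x < ∞ := ae_lt_top hqm (by rw [hq_int]; simp)
  -- rnDeriv identification
  have hkey : (volume.withDensity q).withDensity (fun x => p x / q x) = volume.withDensity p := by
    rw [← withDensity_mul _ hqm (show Measurable (fun x => p x / q x) from hpm.div hqm)]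
    apply withDensity_congr_ae
    filter_upwards [hqt] with x hx
    exact ENNReal.mul_div_cancel' (fun h0 => absurd h0 (hq0 x)) (fun ht => absurd ht hx.ne)
  have hac : volume.withDensity p ≪ volume.withDensity q := by
    rw [← hkey]
    exact withDensity_absolutelyContinuous _ _
  have hrn : (volume.withDensity p).rnDeriv (volume.withDensity q)
      =ᵐ[volume.withDensity q] fun x => p x / q x := by
    rw [← hkey]
    exact Measure.rnDeriv_withDensity _ (hpm.div hqm)
  -- the main integral
  set G : ℝ → ℝ≥0∞ :=
    fun x => ∫⁻ s, gaussianPDF (a s) v' x ^ α * gaussianPDF (b s) v' x ^ (1-α) ∂ν with hGdef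
  have hGm : Measurable (Function.uncurry fun s x =>
      gaussianPDF (a s) v' x ^ α * gaussianPDF (b s) v' x ^ (1-α)) := by
    have h1 : Measurable (fun pr : S × ℝ => gaussianPDF (a pr.1) v' pr.2 ^ α) :=
      ENNReal.continuous_rpow_const.measurable.comp (meas_pdf ha v')
    have h2 : Measurable (fun pr : S × ℝ => gaussianPDF (b pr.1) v' pr.2 ^ (1-α)) :=
      ENNReal.continuous_rpow_const.measurable.comp (meas_pdf hb v')
    exact h1.mul h2
  have pointwise : ∀ᵐ x ∂(volume : Measure ℝ), q x * (p x / q x) ^ α ≤ G x := by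
    filter_upwards [hqt] with x hqx
    have hfm : AEMeasurable (fun s => gaussianPDF (a s) v' x) ν :=
      (meas_pdf_left ha v' x).aemeasurable
    have hgm : AEMeasurable (fun s => gaussianPDF (b s) v' x) ν :=
      (meas_pdf_left hb v' x).aemeasurable
    have h1 : p x ≤ G x ^ (1/α) * q x ^ ((α-1)/α) :=
      holder_step ν hfm hgm hα (fun s => ENNReal.ofReal_ne_top)
        (fun s => (gaussianPDF_pos _ hv' x).ne') (fun s => ENNReal.ofReal_ne_top)
    have h2 : p x ^ α ≤ G x * q x ^ (α-1) := by
      calc p x ^ α ≤ (G x ^ (1/α) * q x ^ ((α-1)/α)) ^ α :=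
            ENNReal.rpow_le_rpow h1 hα0.le
        _ = G x * q x ^ (α-1) := by
            rw [ENNReal.mul_rpow_of_nonneg _ _ hα0.le, ← ENNReal.rpow_mul, ← ENNReal.rpow_mul,
              show 1/α*α = 1 by field_simp, show (α-1)/α*α = α-1 by field_simp,
              ENNReal.rpow_one]
    have hqα0 : q x ^ α ≠ 0 := by
      simp [ENNReal.rpow_eq_zero_iff, hq0 x, hqx.ne]
    have hqαt : q x ^ α ≠ ∞ := by
      simp [ENNReal.rpow_eq_top_iff, hq0 x, hqx.ne]
    have hqe : q x * q x ^ (α-1) = q x ^ α := by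
      nth_rewrite 1 [← ENNReal.rpow_one (q x)]
      rw [← ENNReal.rpow_add _ _ (hq0 x) hqx.ne]
      norm_num
    calc q x * (p x / q x) ^ α = q x * (p x ^ α / q x ^ α) := by
          rw [ENNReal.div_rpow_of_nonneg _ _ hα0.le]
      _ ≤ q x * (G x * q x ^ (α-1) / q x ^ α) := by gcongr
      _ = G x * (q x * q x ^ (α-1)) / q x ^ α := by
          rw [← mul_div_assoc, mul_left_comm]
      _ = G x * (q x ^ α / q x ^ α) := by rw [hqe, mul_div_assoc]
      _ = G x := by rw [ENNReal.div_self hqα0 hqαt, mul_one]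
  -- compute / bound the α-integral
  set t : ℝ := α*(α-1)*h/(2*v) with htdef
  have ht0 : 0 ≤ t := by
    apply div_nonneg _ (by linarith)
    apply mul_nonneg _ hh
    nlinarith
  have hGint : ∫⁻ x, G x ∂volume = ∫⁻ s,
      ENNReal.ofReal (Real.exp (α*(α-1)*(a s - b s)^2/(2*v))) ∂ν := by
    rw [hGdef]
    rw [← lintegral_lintegral_swap hGm.aemeasurable]
    apply lintegral_congr fun s => ?_
    rw [gauss_renyi_integral _ _ hv' hα, hvv]
  have hGle : ∫⁻ x, G x ∂volume ≤ ENNReal.ofReal (Real.exp t) := by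
    rw [hGint]
    calc ∫⁻ s, ENNReal.ofReal (Real.exp (α*(α-1)*(a s - b s)^2/(2*v))) ∂ν
        ≤ ∫⁻ _, ENNReal.ofReal (Real.exp t) ∂ν := by
          apply lintegral_mono_ae
          filter_upwards [hbound] with s hs
          apply ENNReal.ofReal_le_ofReal
          apply Real.exp_le_exp.mpr
          rw [htdef]
          have habs : (a s - b s)^2 ≤ h := hs
          have : (0:ℝ) ≤ α*(α-1) := by nlinarith
          gcongr
      _ = ENNReal.ofReal (Real.exp t) := by simp
  have hIle : ∫⁻ x, (volume.withDensity p).rnDeriv (volume.withDensity q) x ^ α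
      ∂(volume.withDensity q) ≤ ENNReal.ofReal (Real.exp t) := by
    have hmeasr : Measurable fun x => (p x / q x) ^ α :=
      ENNReal.continuous_rpow_const.measurable.comp (hpm.div hqm)
    have hIeq : ∫⁻ x, (volume.withDensity p).rnDeriv (volume.withDensity q) x ^ α
        ∂(volume.withDensity q) = ∫⁻ x, q x * (p x / q x) ^ α ∂volume := by
      calc ∫⁻ x, (volume.withDensity p).rnDeriv (volume.withDensity q) x ^ α
            ∂(volume.withDensity q)
          = ∫⁻ x, (p x / q x) ^ α ∂(volume.withDensity q) :=
            lintegral_congr_ae (hrn.mono fun x hx => by simp only [hx])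
        _ = ∫⁻ x, (q * fun x => (p x / q x) ^ α) x ∂volume :=
            lintegral_withDensity_eq_lintegral_mul _ hqm hmeasr
        _ = ∫⁻ x, q x * (p x / q x) ^ α ∂volume := rfl
    rw [hIeq]
    exact (lintegral_mono_ae pointwise).trans hGle
  have hfin : ∫⁻ x, (volume.withDensity p).rnDeriv (volume.withDensity q) x ^ α
      ∂(volume.withDensity q) ≠ ∞ := (hIle.trans_lt ENNReal.ofReal_lt_top).ne
  rw [renyiDiv, if_pos ⟨hac, hfin⟩]
  apply ENNReal.ofReal_le_ofReal
  have hIle' : (∫⁻ x, (volume.withDensity p).rnDeriv (volume.withDensity q) x ^ α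
      ∂(volume.withDensity q)).toReal ≤ Real.exp t :=
    ENNReal.toReal_le_of_le_ofReal (Real.exp_nonneg _) hIle
  have hlog : Real.log (∫⁻ x, (volume.withDensity p).rnDeriv (volume.withDensity q) x ^ α
      ∂(volume.withDensity q)).toReal ≤ t := by
    rcases le_or_gt (∫⁻ x, (volume.withDensity p).rnDeriv (volume.withDensity q) x ^ α
      ∂(volume.withDensity q)).toReal 1 with hc | hc
    · exact (Real.log_nonpos ENNReal.toReal_nonneg hc).trans ht0
    · calc Real.log _ ≤ Real.log (Real.exp t) := Real.log_le_log (by linarith) hIle'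
        _ = t := Real.log_exp t
  calc (α - 1)⁻¹ * Real.log _ ≤ (α - 1)⁻¹ * t :=
        mul_le_mul_of_nonneg_left hlog (inv_nonneg.mpr (by linarith))
    _ = α / 2 * (h / v) := by
        rw [htdef]
        field_simp

/-- Gaussian sliced Rényi envelope for mixtures:
if the directional mean shifts `⟨m(s) - m'(s), u⟩` are a.s. bounded in square by `h`
and independent Gaussian noise of variance `v` is added along `u`, then the Rényi
divergence of order `α` between the two mixture laws is at most `(α/2)·(h/v)`. -/
theorem gaussian_mixture_renyi_bound {d : ℕ} (hd : 1 ≤ d) {α h v : ℝ}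
    (hα : 1 < α) (hh : 0 ≤ h) (hv : 0 < v)
    (u : Euc d) (hu : ‖u‖ = 1)
    {S : Type*} [MeasurableSpace S] (ν : Measure S) [IsProbabilityMeasure ν]
    (m m' : S → Euc d) (hm : Measurable m) (hm' : Measurable m')
    (hbound : ∀ᵐ s ∂ν, |⟪m s - m' s, u⟫| ^ 2 ≤ h) :
    renyiDiv α
      ((ν.prod (gaussianReal 0 (Real.toNNReal v))).map fun p => ⟪m p.1, u⟫ + p.2)
      ((ν.prod (gaussianReal 0 (Real.toNNReal v))).map fun p => ⟪m' p.1, u⟫ + p.2)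
      ≤ ENNReal.ofReal (α / 2 * (h / v)) := by
  have hv' : (Real.toNNReal v) ≠ 0 := by
    simp only [ne_eq, Real.toNNReal_eq_zero, not_le]
    exact hv
  refine main_aux ν hα hh hv hv' (Real.coe_toNNReal v hv.le)
    (Measurable.inner_const hm) (Measurable.inner_const hm') ?_
  filter_upwards [hbound] with s hs
  have e : ⟪m s, u⟫ - ⟪m' s, u⟫ = ⟪m s - m' s, u⟫ := (inner_sub_left _ _ _).symm
  rw [e, ← sq_abs]
  exact hs
end

section
/- Let α > 1 and T ≥ 1. Let Y_1,…,Y_T be standard Borel spaces and let P and Q be probability measures on the product Y_1 × … × Y_T, with regular conditional distributions P_{t|y_{<t}} and Q_{t|y_{<t}} of the t-th coordinate given the first t−1 coordinates y_{<t}. Suppose there are constants ε_t ≥ 0 such that D_α( P_{t|y_{<t}} ‖ Q_{t|y_{<t}} ) ≤ ε_t for every t ≤ T and Q-almost every history y_{<t}. Then D_α(P ‖ Q) ≤ ∑_{t=1}^T ε_t. -/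
open MeasureTheory ProbabilityTheory Real
open scoped ENNReal NNReal RealInnerProductSpace BigOperators

section Aux

open MeasureTheory ProbabilityTheory Real
open scoped ENNReal

variable {X W : Type*} [MeasurableSpace X] [MeasurableSpace W]

/-- From a bound on the Rényi divergence, extract absolute continuity and a bound on the
defining integral. -/
lemma renyi_le_bound {α : ℝ} (hα : 1 < α) {P Q : Measure X} {c : ℝ} (hc : 0 ≤ c)
    (h : renyiDiv α P Q ≤ ENNReal.ofReal c) :
    P ≪ Q ∧ ∫⁻ x, P.rnDeriv Q x ^ α ∂Q ≤ ENNReal.ofReal (Real.exp ((α - 1) * c)) := by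
  rw [renyiDiv] at h
  split_ifs at h with hcond
  · obtain ⟨hac, hfin⟩ := hcond
    refine ⟨hac, ?_⟩
    have hα1 : (0 : ℝ) < α - 1 := by linarith
    have h1 : (α - 1)⁻¹ * Real.log (∫⁻ x, P.rnDeriv Q x ^ α ∂Q).toReal ≤ c :=
      (ENNReal.ofReal_le_ofReal_iff hc).mp h
    have h2 : Real.log (∫⁻ x, P.rnDeriv Q x ^ α ∂Q).toReal ≤ (α - 1) * c := by
      have := mul_le_mul_of_nonneg_left h1 hα1.le
      rwa [← mul_assoc, mul_inv_cancel₀ hα1.ne', one_mul] at this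
    have h3 : (∫⁻ x, P.rnDeriv Q x ^ α ∂Q).toReal ≤ Real.exp ((α - 1) * c) :=
      le_trans (Real.le_exp_log _) (Real.exp_le_exp.mpr h2)
    exact (ENNReal.le_ofReal_iff_toReal_le hfin (Real.exp_pos _).le).mpr h3
  · exact absurd h (by simp)

/-- Converse direction: a bound on the defining integral gives a bound on the Rényi
divergence. -/
lemma renyi_le_of_int_le {α : ℝ} (hα : 1 < α) {P Q : Measure X} {c : ℝ} (hc : 0 ≤ c)
    (hac : P ≪ Q)
    (hK : ∫⁻ x, P.rnDeriv Q x ^ α ∂Q ≤ ENNReal.ofReal (Real.exp ((α - 1) * c))) :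
    renyiDiv α P Q ≤ ENNReal.ofReal c := by
  have hα1 : (0 : ℝ) < α - 1 := by linarith
  have hfin : ∫⁻ x, P.rnDeriv Q x ^ α ∂Q ≠ ∞ := (hK.trans_lt ENNReal.ofReal_lt_top).ne
  rw [renyiDiv, if_pos ⟨hac, hfin⟩]
  refine ENNReal.ofReal_le_ofReal ?_
  have hKr : (∫⁻ x, P.rnDeriv Q x ^ α ∂Q).toReal ≤ Real.exp ((α - 1) * c) :=
    ENNReal.toReal_le_of_le_ofReal (Real.exp_pos _).le hK
  have hlog : Real.log (∫⁻ x, P.rnDeriv Q x ^ α ∂Q).toReal ≤ (α - 1) * c := by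
    rcases eq_or_lt_of_le (ENNReal.toReal_nonneg
        (a := ∫⁻ x, P.rnDeriv Q x ^ α ∂Q)) with h0 | h0
    · rw [← h0, Real.log_zero]
      exact mul_nonneg hα1.le hc
    · exact (Real.log_le_iff_le_exp h0).mpr hKr
  calc (α - 1)⁻¹ * Real.log (∫⁻ x, P.rnDeriv Q x ^ α ∂Q).toReal
      ≤ (α - 1)⁻¹ * ((α - 1) * c) :=
        mul_le_mul_of_nonneg_left hlog (inv_nonneg.mpr hα1.le)
    _ = c := by field_simp

/-- Transfer of the Rényi integral through a measurable equivalence. -/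
lemma renyi_int_map_equiv (e : X ≃ᵐ W) (α : ℝ) (P Q : Measure X)
    [IsFiniteMeasure P] [IsFiniteMeasure Q] :
    ∫⁻ z, ((P.map e).rnDeriv (Q.map e) z) ^ α ∂(Q.map e)
      = ∫⁻ x, (P.rnDeriv Q x) ^ α ∂Q := by
  rw [lintegral_map ((Measure.measurable_rnDeriv _ _).pow_const α) e.measurable]
  refine lintegral_congr_ae ?_
  filter_upwards [e.measurableEmbedding.rnDeriv_map P Q] with x hx
  rw [hx]

/-- Key step: composition of a measure with a kernel multiplies the Rényi integral by at most
the essential bound on the conditional Rényi integrals. -/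
lemma step_good [MeasurableSpace.CountablyGenerated W] {α : ℝ} (hα : 1 < α)
    (μ ν : Measure X) [IsProbabilityMeasure μ] [IsProbabilityMeasure ν]
    (κ η : Kernel X W) [IsMarkovKernel κ] [IsMarkovKernel η]
    {c : ℝ} (hc : 0 ≤ c) (hac : μ ≪ ν)
    (hstep : ∀ᵐ x ∂ν, renyiDiv α (κ x) (η x) ≤ ENNReal.ofReal c) :
    (μ ⊗ₘ κ) ≪ (ν ⊗ₘ η) ∧
      ∫⁻ p, ((μ ⊗ₘ κ).rnDeriv (ν ⊗ₘ η) p) ^ α ∂(ν ⊗ₘ η)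
        ≤ ENNReal.ofReal (Real.exp ((α - 1) * c)) * ∫⁻ x, (μ.rnDeriv ν x) ^ α ∂ν := by
  have hαpos : (0 : ℝ) ≤ α := by linarith
  have hae : ∀ᵐ x ∂ν, (κ x ≪ η x) ∧
      ∫⁻ y, ((κ x).rnDeriv (η x) y) ^ α ∂(η x) ≤ ENNReal.ofReal (Real.exp ((α - 1) * c)) :=
    hstep.mono fun x hx => renyi_le_bound hα hc hx
  have haeμ : ∀ᵐ x ∂μ, κ x ≪ η x :=
    (hae.mono fun x h => h.1).filter_mono hac.ae_le
  have hACtotal : μ ⊗ₘ κ ≪ ν ⊗ₘ η := Measure.AbsolutelyContinuous.compProd hac haeμ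
  set f := μ.rnDeriv ν with hf_def
  set g := Kernel.rnDeriv κ η with hg_def
  have hf : Measurable f := Measure.measurable_rnDeriv μ ν
  have hgm : Measurable fun p : X × W => g p.1 p.2 := Kernel.measurable_rnDeriv κ η
  have hH : Measurable fun p : X × W => f p.1 * g p.1 p.2 := (hf.comp measurable_fst).mul hgm
  have hμ_eq : μ = ν.withDensity f := (Measure.withDensity_rnDeriv_eq μ ν hac).symm
  have hκ_eq : ∀ᵐ x ∂ν, κ x = (η x).withDensity (g x) := by
    filter_upwards [hae] with x hx
    rw [withDensity_congr_ae (Kernel.rnDeriv_eq_rnDeriv_measure (κ := κ) (η := η) (a := x)),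
      Measure.withDensity_rnDeriv_eq _ _ hx.1]
  have hcomp : μ ⊗ₘ κ = (ν ⊗ₘ η).withDensity fun p => f p.1 * g p.1 p.2 := by
    ext s hs
    rw [withDensity_apply _ hs, Measure.compProd_apply hs,
      ← lintegral_indicator hs _, Measure.lintegral_compProd (hH.indicator hs)]
    conv_lhs => rw [hμ_eq]
    rw [lintegral_withDensity_eq_lintegral_mul ν hf (Kernel.measurable_kernel_prodMk_left hs)]
    refine lintegral_congr_ae ?_
    filter_upwards [hκ_eq] with x hx
    simp only [Pi.mul_apply]
    rw [hx, withDensity_apply _ (measurable_prodMk_left hs),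
      ← lintegral_const_mul _ (Kernel.measurable_rnDeriv_right κ η x),
      ← lintegral_indicator (measurable_prodMk_left hs) _]
    refine lintegral_congr fun y => ?_
    by_cases hy : (x, y) ∈ s
    · rw [Set.indicator_of_mem hy, Set.indicator_of_mem (by exact hy)]
    · rw [Set.indicator_of_notMem hy, Set.indicator_of_notMem (by exact hy)]
  have hrn : (μ ⊗ₘ κ).rnDeriv (ν ⊗ₘ η) =ᵐ[ν ⊗ₘ η] fun p => f p.1 * g p.1 p.2 := by
    rw [hcomp]; exact Measure.rnDeriv_withDensity _ hH
  refine ⟨hACtotal, ?_⟩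
  calc ∫⁻ p, ((μ ⊗ₘ κ).rnDeriv (ν ⊗ₘ η) p) ^ α ∂(ν ⊗ₘ η)
      = ∫⁻ p, (f p.1 * g p.1 p.2) ^ α ∂(ν ⊗ₘ η) :=
        lintegral_congr_ae (hrn.mono fun p hp => by simp only [hp])
    _ = ∫⁻ x, ∫⁻ y, (f x * g x y) ^ α ∂(η x) ∂ν :=
        Measure.lintegral_compProd (hH.pow_const α)
    _ = ∫⁻ x, f x ^ α * ∫⁻ y, (g x y) ^ α ∂(η x) ∂ν := by
        refine lintegral_congr fun x => ?_
        simp_rw [ENNReal.mul_rpow_of_nonneg _ _ hαpos]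
        rw [lintegral_const_mul _ ((Kernel.measurable_rnDeriv_right κ η x).pow_const α)]
    _ ≤ ∫⁻ x, f x ^ α * ENNReal.ofReal (Real.exp ((α - 1) * c)) ∂ν := by
        refine lintegral_mono_ae ?_
        filter_upwards [hae] with x hx
        refine mul_le_mul_right ?_ _
        have hgg : ∫⁻ y, (g x y) ^ α ∂(η x) = ∫⁻ y, ((κ x).rnDeriv (η x) y) ^ α ∂(η x) :=
          lintegral_congr_ae
            ((Kernel.rnDeriv_eq_rnDeriv_measure (κ := κ) (η := η) (a := x)).mono
              fun y hy => by rw [hg_def]; simp only [hy])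
        rw [hgg]; exact hx.2
    _ = ENNReal.ofReal (Real.exp ((α - 1) * c)) * ∫⁻ x, f x ^ α ∂ν := by
        simp_rw [mul_comm]
        exact lintegral_const_mul _ (hf.pow_const α)

/-- The snoc measurable equivalence. -/
def snocEquiv (t : ℕ) (Y : ℕ → Type*) [∀ n, MeasurableSpace (Y n)] :
    ((∀ i : Fin t, Y i) × Y t) ≃ᵐ (∀ i : Fin (t + 1), Y i) where
  toFun p := Fin.snoc p.1 p.2
  invFun y := (Fin.init y, y (Fin.last t))
  left_inv p := by
    ext
    · simp [Fin.init_snoc]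
    · simp
  right_inv y := by simp
  measurable_toFun := by
    apply measurable_pi_lambda
    intro i
    induction i using Fin.lastCases with
    | last => simpa using measurable_snd
    | cast j => simp; exact (measurable_pi_apply j).comp measurable_fst
  measurable_invFun :=
    Measurable.prod (measurable_pi_lambda _ fun j => measurable_pi_apply _)
      (measurable_pi_apply _)

lemma renyi_int_self (Q : Measure X) [IsProbabilityMeasure Q] (α : ℝ) :
    ∫⁻ x, (Q.rnDeriv Q x) ^ α ∂Q = 1 := by
  have h : (fun x => (Q.rnDeriv Q x) ^ α) =ᵐ[Q] fun _ => 1 :=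
    (Measure.rnDeriv_self Q).mono fun x hx => by simp [hx]
  rw [lintegral_congr_ae h, lintegral_one, measure_univ]

lemma prob_eq_of_subsingleton [Subsingleton X] (P Q : Measure X)
    [IsProbabilityMeasure P] [IsProbabilityMeasure Q] : P = Q := by
  ext s _
  rcases s.eq_empty_or_nonempty with h | h
  · simp [h]
  · rw [h.eq_univ]
    simp

end Aux

/-- adaptive composition of Rényi divergence:
if `P` and `Q` on a product of standard Borel spaces disintegrate through Markov
kernels `κ t` and `η t` (their regular conditional distributions of the `t`-th
coordinate given the history), and each conditional Rényi divergence is bounded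
by `ε t` for `Q`-almost every history, then `D_α(P‖Q) ≤ ∑_t ε t`. -/
theorem adaptive_renyi_composition {α : ℝ} (hα : 1 < α) {T : ℕ} (hT : 1 ≤ T)
    (Y : ℕ → Type*) [∀ n, MeasurableSpace (Y n)] [∀ n, StandardBorelSpace (Y n)]
    (P Q : Measure ((t : Fin T) → Y t)) [IsProbabilityMeasure P] [IsProbabilityMeasure Q]
    (κ η : (t : ℕ) → Kernel ((s : Fin t) → Y s) (Y t))
    [∀ t, IsMarkovKernel (κ t)] [∀ t, IsMarkovKernel (η t)]
    (hP : ∀ (t : ℕ) (ht : t < T),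
      P.map (fun y (i : Fin (t + 1)) => y ⟨i.1, i.2.trans_le ht⟩) =
        ((P.map fun y (i : Fin t) => y ⟨i.1, i.2.trans ht⟩) ⊗ₘ κ t).map
          (fun p => (Fin.snoc p.1 p.2 : (i : Fin (t + 1)) → Y i)))
    (hQ : ∀ (t : ℕ) (ht : t < T),
      Q.map (fun y (i : Fin (t + 1)) => y ⟨i.1, i.2.trans_le ht⟩) =
        ((Q.map fun y (i : Fin t) => y ⟨i.1, i.2.trans ht⟩) ⊗ₘ η t).map
          (fun p => (Fin.snoc p.1 p.2 : (i : Fin (t + 1)) → Y i)))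
    (ε : ℕ → ℝ) (hε : ∀ t, 0 ≤ ε t)
    (hstep : ∀ (t : ℕ) (ht : t < T),
      ∀ᵐ y ∂(Q.map fun y (i : Fin t) => y ⟨i.1, i.2.trans ht⟩),
        renyiDiv α (κ t y) (η t y) ≤ ENNReal.ofReal (ε t)) :
    renyiDiv α P Q ≤ ENNReal.ofReal (∑ t ∈ Finset.range T, ε t) := by
  classical
  let res : ∀ (t : ℕ), t ≤ T → ((∀ i : Fin T, Y i) → ∀ i : Fin t, Y i) :=
    fun t h y i => y (Fin.castLE h i)
  have hmeas : ∀ (t : ℕ) (h : t ≤ T),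
      Measurable (res t h) :=
    fun t h => measurable_pi_lambda _ fun i => measurable_pi_apply _
  have main : ∀ t (h : t ≤ T),
      (P.map (res t h)) ≪ (Q.map (res t h)) ∧
        ∫⁻ x, ((P.map (res t h)).rnDeriv (Q.map (res t h)) x) ^ α
            ∂(Q.map (res t h)) ≤
          ENNReal.ofReal (Real.exp ((α - 1) * ∑ s ∈ Finset.range t, ε s)) := by
    intro t
    induction t with
    | zero =>
      intro h
      haveI : Subsingleton (∀ i : Fin 0, Y i) := ⟨fun a b => funext fun i => i.elim0⟩
      haveI : IsProbabilityMeasure (P.map (res 0 h)) :=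
        Measure.isProbabilityMeasure_map (hmeas 0 h).aemeasurable
      haveI : IsProbabilityMeasure (Q.map (res 0 h)) :=
        Measure.isProbabilityMeasure_map (hmeas 0 h).aemeasurable
      have hPQ : P.map (res 0 h) = Q.map (res 0 h) :=
        prob_eq_of_subsingleton _ _
      rw [hPQ]
      refine ⟨Measure.AbsolutelyContinuous.rfl, ?_⟩
      rw [renyi_int_self]
      simp
    | succ t ih =>
      intro h
      have ht : t < T := h
      obtain ⟨ih1, ih2⟩ := ih ht.le
      haveI : IsProbabilityMeasure (P.map (res t ht.le)) :=
        Measure.isProbabilityMeasure_map (hmeas t ht.le).aemeasurable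
      haveI : IsProbabilityMeasure (Q.map (res t ht.le)) :=
        Measure.isProbabilityMeasure_map (hmeas t ht.le).aemeasurable
      have hstep' : ∀ᵐ y ∂(Q.map (res t ht.le)),
          renyiDiv α (κ t y) (η t y) ≤ ENNReal.ofReal (ε t) := hstep t ht
      have hsg := step_good hα (P.map (res t ht.le))
        (Q.map (res t ht.le)) (κ t) (η t) (hε t) ih1 hstep'
      have hPe : P.map (res (t + 1) h) =
          (P.map (res t ht.le) ⊗ₘ κ t).map
            (snocEquiv t Y) := hP t ht
      have hQe : Q.map (res (t + 1) h) =
          (Q.map (res t ht.le) ⊗ₘ η t).map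
            (snocEquiv t Y) := hQ t ht
      rw [hPe, hQe]
      constructor
      · exact hsg.1.map (snocEquiv t Y).measurable
      · rw [renyi_int_map_equiv (snocEquiv t Y) α _ _]
        refine le_trans hsg.2 (le_trans (mul_le_mul_right ih2 _) ?_)
        rw [← ENNReal.ofReal_mul (Real.exp_pos _).le, ← Real.exp_add]
        refine ENNReal.ofReal_le_ofReal (Real.exp_le_exp.mpr (le_of_eq ?_))
        rw [Finset.sum_range_succ]; ring
  have hfinal := main T le_rfl
  have hid : res T le_rfl = id := rfl
  rw [hid] at hfinal
  simp only [Measure.map_id] at hfinal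
  exact renyi_le_of_int_le hα (Finset.sum_nonneg fun s _ => hε s) hfinal.1 hfinal.2
end

section
/- Let d ≥ 1, α > 1, ε ≥ 0, δ ∈ (0,1), let P and Q be probability measures on ℝ^d, and let ω be a probability measure on S^{d−1} such that the maps u ↦ D_α(Ψ^u_# P ‖ Ψ^u_# Q) and u ↦ D_∞^δ(Ψ^u_# P ‖ Ψ^u_# Q) are measurable. If AveSD_α^ω(P‖Q) ≤ ε, then ∫_{S^{d−1}} D_∞^δ( Ψ^u_# P ‖ Ψ^u_# Q ) dω(u) ≤ ε + log(1/δ)/(α−1). -/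
open MeasureTheory ProbabilityTheory Real
open scoped ENNReal NNReal RealInnerProductSpace BigOperators

/-- Pointwise Rényi-to-approximate-max-divergence conversion. -/
lemma renyi_to_dInfDelta {Ω : Type*} [MeasurableSpace Ω]
    (p q : Measure Ω) [IsProbabilityMeasure p] [IsProbabilityMeasure q]
    {α δ : ℝ} (hα : 1 < α) (hδ0 : 0 < δ) :
    dInfDelta δ p q ≤ renyiDiv α p q + ENNReal.ofReal (Real.log (1 / δ) / (α - 1)) := by
  classical
  by_cases h : p ≪ q ∧ ∫⁻ x, p.rnDeriv q x ^ α ∂q ≠ ∞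
  · obtain ⟨hac, hI⟩ := h
    set f : Ω → ℝ≥0∞ := p.rnDeriv q with hf_def
    set I : ℝ≥0∞ := ∫⁻ x, f x ^ α ∂q with hI_def
    have hf : Measurable f := Measure.measurable_rnDeriv p q
    have hfα : Measurable fun x => f x ^ α :=
      ENNReal.continuous_rpow_const.measurable.comp hf
    have hα1 : (0:ℝ) < α - 1 := sub_pos.mpr hα
    have hαpos : (0:ℝ) < α := lt_trans one_pos hα
    have hIne : I ≠ 0 := by
      intro h0
      have hz : ∀ᵐ x ∂q, f x ^ α = 0 := (lintegral_eq_zero_iff hfα).mp h0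
      have hz' : ∀ᵐ x ∂q, f x = 0 := by
        filter_upwards [hz] with x hx
        rcases ENNReal.rpow_eq_zero_iff.mp hx with ⟨h1, _⟩ | ⟨_, h2⟩
        · exact h1
        · exact absurd h2 (not_lt.mpr hαpos.le)
      have h1 : ∫⁻ x, f x ∂q = 0 := by
        rw [lintegral_congr_ae hz', lintegral_zero]
      have h2 : ∫⁻ x, f x ∂q = p Set.univ := Measure.lintegral_rnDeriv hac
      rw [h2, measure_univ] at h1
      exact one_ne_zero h1
    have hItR : 0 < I.toReal := ENNReal.toReal_pos hIne hI
    set R : ℝ := (α - 1)⁻¹ * Real.log I.toReal with hR_def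
    have hRD : renyiDiv α p q = ENNReal.ofReal R := if_pos ⟨hac, hI⟩
    set c₀ : ℝ := R + Real.log (1 / δ) / (α - 1) with hc₀_def
    set T : ℝ≥0∞ := ENNReal.ofReal (Real.exp c₀) with hT_def
    have hTne0 : T ≠ 0 := by
      simp [hT_def, ENNReal.ofReal_eq_zero, not_le, Real.exp_pos]
    have hTpow : T ^ (α - 1) = ENNReal.ofReal (I.toReal / δ) := by
      rw [hT_def, ENNReal.ofReal_rpow_of_pos (Real.exp_pos _)]
      congr 1
      rw [Real.rpow_def_of_pos (Real.exp_pos _), Real.log_exp]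
      have : c₀ * (α - 1) = Real.log I.toReal + Real.log (1 / δ) := by
        have hne : α - 1 ≠ 0 := ne_of_gt hα1
        rw [hc₀_def, hR_def, add_mul, div_mul_cancel₀ _ hne, mul_comm ((α - 1)⁻¹) _, mul_assoc,
          inv_mul_cancel₀ hne, mul_one]
      rw [this, Real.exp_add, Real.exp_log hItR, Real.exp_log (by positivity)]
      field_simp
    have hKne0 : ENNReal.ofReal (I.toReal / δ) ≠ 0 := by
      simp only [ne_eq, ENNReal.ofReal_eq_zero, not_le]
      positivity
    have hKneT : ENNReal.ofReal (I.toReal / δ) ≠ ⊤ := ENNReal.ofReal_ne_top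
    set s : Set Ω := {x | T < f x} with hs_def
    have hptwise : ∀ x ∈ s, T ^ (α - 1) * f x ≤ f x ^ α := by
      intro x hx
      have hxlt : T < f x := hx
      by_cases hfx : f x = ⊤
      · rw [hfx, ENNReal.top_rpow_of_pos hαpos]
        exact le_top
      · have hne0 : f x ≠ 0 := by
          intro h0
          rw [h0] at hxlt
          exact absurd hxlt (by simp)
        have h1 : T ^ (α - 1) ≤ f x ^ (α - 1) :=
          ENNReal.rpow_le_rpow hxlt.le hα1.le
        have h2 : f x ^ (α - 1) * f x = f x ^ α := by
          calc f x ^ (α - 1) * f x = f x ^ (α - 1) * f x ^ (1 : ℝ) := by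
                rw [ENNReal.rpow_one]
            _ = f x ^ (α - 1 + 1) := (ENNReal.rpow_add _ _ hne0 hfx).symm
            _ = f x ^ α := by norm_num
        calc T ^ (α - 1) * f x ≤ f x ^ (α - 1) * f x := mul_le_mul_left h1 _
          _ = f x ^ α := h2
    have htail1 : ENNReal.ofReal (I.toReal / δ) * p s ≤ I := by
      rw [← hTpow, ← Measure.setLIntegral_rnDeriv hac s, ← lintegral_const_mul _ hf]
      calc ∫⁻ x in s, T ^ (α - 1) * f x ∂q
          ≤ ∫⁻ x in s, f x ^ α ∂q := setLIntegral_mono hfα hptwise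
        _ ≤ ∫⁻ x, f x ^ α ∂q := setLIntegral_le_lintegral _ _
    have htail : p s ≤ ENNReal.ofReal δ := by
      have h1 : p s ≤ I / ENNReal.ofReal (I.toReal / δ) :=
        (ENNReal.le_div_iff_mul_le (Or.inl hKne0) (Or.inl hKneT)).mpr
          (by rw [mul_comm]; exact htail1)
      calc p s ≤ I / ENNReal.ofReal (I.toReal / δ) := h1
        _ = ENNReal.ofReal I.toReal / ENNReal.ofReal (I.toReal / δ) := by
            rw [ENNReal.ofReal_toReal hI]
        _ = ENNReal.ofReal (I.toReal / (I.toReal / δ)) :=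
            (ENNReal.ofReal_div_of_pos (by positivity)).symm
        _ = ENNReal.ofReal δ := by
            congr 1
            field_simp
    have hmem : ENNReal.ofReal c₀ ∈
        {ε : ℝ≥0∞ | ∀ A : Set Ω, MeasurableSet A → p A ≤ eexp ε * q A + ENNReal.ofReal δ} := by
      intro A hA
      have hTle : T ≤ eexp (ENNReal.ofReal c₀) := by
        rw [eexp, if_neg ENNReal.ofReal_ne_top]
        refine ENNReal.ofReal_le_ofReal (Real.exp_le_exp.mpr ?_)
        rw [ENNReal.toReal_ofReal']
        exact le_max_left _ _
      have hst : MeasurableSet {x | f x ≤ T} := measurableSet_le hf measurable_const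
      have hsplit : p A ≤ T * q A + ENNReal.ofReal δ := by
        calc p A = ∫⁻ x in A, f x ∂q := (Measure.setLIntegral_rnDeriv hac A).symm
          _ = ∫⁻ x in A ∩ {x | f x ≤ T}, f x ∂q + ∫⁻ x in A \ {x | f x ≤ T}, f x ∂q :=
              (lintegral_inter_add_diff f A hst).symm
          _ ≤ T * q A + ENNReal.ofReal δ := by
              refine add_le_add ?_ ?_
              · calc ∫⁻ x in A ∩ {x | f x ≤ T}, f x ∂q
                    ≤ ∫⁻ _ in A ∩ {x | f x ≤ T}, T ∂q :=
                      setLIntegral_mono measurable_const fun x hx => hx.2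
                  _ = T * q (A ∩ {x | f x ≤ T}) := setLIntegral_const _ _
                  _ ≤ T * q A := mul_le_mul_right (measure_mono Set.inter_subset_left) _
              · calc ∫⁻ x in A \ {x | f x ≤ T}, f x ∂q
                    ≤ ∫⁻ x in s, f x ∂q :=
                      lintegral_mono_set fun x hx => show T < f x from lt_of_not_ge hx.2
                  _ = p s := Measure.setLIntegral_rnDeriv hac s
                  _ ≤ ENNReal.ofReal δ := htail
      exact hsplit.trans (add_le_add_left (mul_le_mul_left hTle _) _)
    calc dInfDelta δ p q ≤ ENNReal.ofReal c₀ := sInf_le hmem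
      _ ≤ ENNReal.ofReal R + ENNReal.ofReal (Real.log (1 / δ) / (α - 1)) :=
          ENNReal.ofReal_add_le
      _ = renyiDiv α p q + ENNReal.ofReal (Real.log (1 / δ) / (α - 1)) := by rw [hRD]
  · have hnone : renyiDiv α p q = ∞ := if_neg h
    rw [hnone]
    simp

/-- Ave-SRPP implies average sliced approximate max-divergence:
if the average sliced Rényi divergence of order `α` is at most `ε`, then the
`ω`-average of the per-slice approximate max-divergences `D_∞^δ` is at most
`ε + log(1/δ)/(α-1)`. -/
theorem aveSRPP_to_aveSPP {d : ℕ} (hd : 1 ≤ d) {α ε δ : ℝ} (hα : 1 < α) (hε : 0 ≤ ε)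
    (hδ0 : 0 < δ) (hδ1 : δ < 1)
    (P Q : Measure (Euc d)) [IsProbabilityMeasure P] [IsProbabilityMeasure Q]
    (ω : Measure (Euc d)) [IsProbabilityMeasure ω] (hsupp : ∀ᵐ u ∂ω, ‖u‖ = 1)
    (hmeas₁ : Measurable fun u : Euc d => renyiDiv α (proj u P) (proj u Q))
    (hmeas₂ : Measurable fun u : Euc d => dInfDelta δ (proj u P) (proj u Q))
    (hAve : aveSD α ω P Q ≤ ENNReal.ofReal ε) :
    ∫⁻ u, dInfDelta δ (proj u P) (proj u Q) ∂ω
      ≤ ENNReal.ofReal ε + ENNReal.ofReal (Real.log (1 / δ) / (α - 1)) := by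
  have hproj : ∀ u : Euc d, Measurable fun a : Euc d => ⟪a, u⟫ := fun u =>
    (continuous_id.inner continuous_const).measurable
  have hPinst : ∀ u : Euc d, IsProbabilityMeasure (proj u P) := fun u =>
    Measure.isProbabilityMeasure_map (hproj u).aemeasurable
  have hQinst : ∀ u : Euc d, IsProbabilityMeasure (proj u Q) := fun u =>
    Measure.isProbabilityMeasure_map (hproj u).aemeasurable
  have hpt : ∀ u : Euc d, dInfDelta δ (proj u P) (proj u Q)
      ≤ renyiDiv α (proj u P) (proj u Q) + ENNReal.ofReal (Real.log (1 / δ) / (α - 1)) := by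
    intro u
    haveI := hPinst u
    haveI := hQinst u
    exact renyi_to_dInfDelta (proj u P) (proj u Q) hα hδ0
  calc ∫⁻ u, dInfDelta δ (proj u P) (proj u Q) ∂ω
      ≤ ∫⁻ u, (renyiDiv α (proj u P) (proj u Q)
          + ENNReal.ofReal (Real.log (1 / δ) / (α - 1))) ∂ω :=
        lintegral_mono fun u => hpt u
    _ = ∫⁻ u, renyiDiv α (proj u P) (proj u Q) ∂ω
          + ENNReal.ofReal (Real.log (1 / δ) / (α - 1)) := by
        rw [lintegral_add_right _ measurable_const, lintegral_const, measure_univ, mul_one]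
    _ ≤ ENNReal.ofReal ε + ENNReal.ofReal (Real.log (1 / δ) / (α - 1)) :=
        add_le_add_left hAve _
end

section
/- Let d ≥ 1, α > 1, ε ≥ 0, δ ∈ (0,1), let P and Q be probability measures on ℝ^d, and let ω be a probability measure on S^{d−1} such that u ↦ D_α(Ψ^u_# P ‖ Ψ^u_# Q) is measurable. Let P̃ be the law on S^{d−1} × ℝ of the pair (U, ⟨Z, U⟩) where U ∼ ω and Z ∼ P are independent, and let Q̃ be defined analogously with Z ∼ Q. Then D_α(P̃ ‖ Q̃) = JSD_α^ω(P‖Q), and consequently, if JSD_α^ω(P‖Q) ≤ ε, then for every measurable set A ⊆ S^{d−1} × ℝ, P̃(A) ≤ exp( ε + log(1/δ)/(α−1) )·Q̃(A) + δ. -/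
open MeasureTheory ProbabilityTheory Real
open scoped ENNReal NNReal RealInnerProductSpace BigOperators

section Aux
variable {α γ : Type*} {mα : MeasurableSpace α} {mγ : MeasurableSpace γ}
  [MeasurableSpace.CountableOrCountablyGenerated α γ]
  (μ : Measure α) [IsFiniteMeasure μ] (κ η : Kernel α γ) [IsFiniteKernel κ] [IsFiniteKernel η]

lemma compProd_withDensity_rnDeriv :
    μ ⊗ₘ (η.withDensity (κ.rnDeriv η)) =
      (μ ⊗ₘ η).withDensity (fun p => κ.rnDeriv η p.1 p.2) := by
  ext s hs
  rw [Measure.compProd_apply hs, withDensity_apply _ hs,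
    ← lintegral_indicator hs (f := fun p => κ.rnDeriv η p.1 p.2),
    Measure.lintegral_compProd (((Kernel.measurable_rnDeriv κ η)).indicator hs)]
  refine lintegral_congr fun a => ?_
  rw [Kernel.withDensity_apply' _ (Kernel.measurable_rnDeriv κ η),
    ← lintegral_indicator (measurable_prodMk_left hs)
      (f := fun x => κ.rnDeriv η a x)]
  refine lintegral_congr fun x => ?_
  by_cases h : (a, x) ∈ s
  · rw [Set.indicator_of_mem h, Set.indicator_of_mem (show x ∈ Prod.mk a ⁻¹' s from h)]
  · rw [Set.indicator_of_notMem h, Set.indicator_of_notMem (show x ∉ Prod.mk a ⁻¹' s from h)]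

lemma compProd_singularPart_mutuallySingular :
    (μ ⊗ₘ κ.singularPart η) ⟂ₘ (μ ⊗ₘ η) := by
  refine ⟨(Kernel.mutuallySingularSet κ η)ᶜ,
    (Kernel.measurableSet_mutuallySingularSet κ η).compl, ?_, ?_⟩
  · rw [Measure.compProd_apply (Kernel.measurableSet_mutuallySingularSet κ η).compl]
    have h0 : ∀ a, (κ.singularPart η) a ((Prod.mk a ⁻¹' Kernel.mutuallySingularSet κ η)ᶜ) = 0 := by
      intro a
      have h1 : (Prod.mk a ⁻¹' Kernel.mutuallySingularSet κ η)ᶜ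
          = (Kernel.mutuallySingularSetSlice κ η a)ᶜ := rfl
      rw [h1, Kernel.singularPart_compl_mutuallySingularSetSlice]
    simp only [Set.preimage_compl] at h0 ⊢
    simp [h0]
  · rw [compl_compl, Measure.compProd_apply (Kernel.measurableSet_mutuallySingularSet κ η)]
    have h0 : ∀ a, η a (Prod.mk a ⁻¹' Kernel.mutuallySingularSet κ η) = 0 := by
      intro a
      have h1 : Prod.mk a ⁻¹' Kernel.mutuallySingularSet κ η
          = Kernel.mutuallySingularSetSlice κ η a := rfl
      rw [h1, Kernel.measure_mutuallySingularSetSlice]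
    simp [h0]

lemma compProd_decomp :
    μ ⊗ₘ κ = (μ ⊗ₘ κ.singularPart η)
      + (μ ⊗ₘ η).withDensity (fun p => κ.rnDeriv η p.1 p.2) := by
  rw [← compProd_withDensity_rnDeriv μ κ η, ← Measure.compProd_add_right]
  rw [add_comm, Kernel.rnDeriv_add_singularPart]

lemma rnDeriv_compProd_same :
    (fun p : α × γ => κ.rnDeriv η p.1 p.2) =ᵐ[μ ⊗ₘ η] (μ ⊗ₘ κ).rnDeriv (μ ⊗ₘ η) :=
  Measure.eq_rnDeriv (Kernel.measurable_rnDeriv κ η)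
    (compProd_singularPart_mutuallySingular μ κ η) (compProd_decomp μ κ η)

lemma ae_ac_of_compProd_ac (h : μ ⊗ₘ κ ≪ μ ⊗ₘ η) : ∀ᵐ a ∂μ, κ a ≪ η a := by
  set S := Kernel.mutuallySingularSet κ η with hS
  have hSm := Kernel.measurableSet_mutuallySingularSet κ η
  have hη : (μ ⊗ₘ η) S = 0 := by
    rw [Measure.compProd_apply hSm]
    have h0 : ∀ a, η a (Prod.mk a ⁻¹' S) = 0 := fun a =>
      Kernel.measure_mutuallySingularSetSlice κ η a
    simp only [hS] at h0
    simp [h0]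
  have hκ : (μ ⊗ₘ κ) S = 0 := h hη
  rw [Measure.compProd_apply hSm,
    lintegral_eq_zero_iff (Kernel.measurable_kernel_prodMk_left hSm)] at hκ
  filter_upwards [hκ] with a ha
  rw [← Kernel.singularPart_eq_zero_iff_absolutelyContinuous,
    Kernel.singularPart_eq_zero_iff_apply_eq_zero]
  set t := Kernel.mutuallySingularSetSlice κ η a with ht
  have h2 : κ a t = (η.withDensity (κ.rnDeriv η)) a t + (κ.singularPart η) a t := by
    have := congrArg (fun k : Kernel α γ => (k a) t) (Kernel.rnDeriv_add_singularPart κ η)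
    simpa using this.symm
  have : κ a t = 0 := ha
  have h3 : (κ.singularPart η) a t = 0 := by
    rw [h2] at this
    exact (add_eq_zero.mp this).2
  exact h3

end Aux
open MeasureTheory ProbabilityTheory Real Set
open scoped ENNReal RealInnerProductSpace

section ProjKernel
variable {d : ℕ}

lemma measurable_projFun (u : Euc d) : Measurable fun a : Euc d => ⟪a, u⟫ :=
  (continuous_id.inner continuous_const).measurable

lemma measurable_projFun2 : Measurable fun p : Euc d × Euc d => ⟪p.2, p.1⟫ :=
  (continuous_snd.inner continuous_fst).measurable

/-- the kernel `u ↦ proj u P`. -/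
noncomputable def projKernel (P : Measure (Euc d)) [IsFiniteMeasure P] :
    Kernel (Euc d) ℝ where
  toFun u := proj u P
  measurable' := by
    refine Measure.measurable_of_measurable_coe _ fun s hs => ?_
    simp only [proj]
    have h1 : ∀ u : Euc d, P.map (fun a => ⟪a, u⟫) s = ∫⁻ a, s.indicator (fun _ => 1) ⟪a, u⟫ ∂P := by
      intro u
      rw [Measure.map_apply (measurable_projFun u) hs, ← lintegral_indicator_one
        ((measurable_projFun u) hs)]
      rfl
    simp only [h1]
    exact Measurable.lintegral_prod_right
      ((measurable_indicator_const_iff (1 : ℝ≥0∞)).mpr hs |>.comp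
        (measurable_snd.inner measurable_fst))

@[simp] lemma projKernel_apply (P : Measure (Euc d)) [IsFiniteMeasure P] (u : Euc d) :
    projKernel P u = proj u P := rfl

instance (P : Measure (Euc d)) [IsProbabilityMeasure P] : IsMarkovKernel (projKernel P) := by
  constructor
  intro u
  simp only [projKernel_apply, proj]
  exact Measure.isProbabilityMeasure_map (measurable_projFun u).aemeasurable

instance proj_isProbabilityMeasure (u : Euc d) (P : Measure (Euc d))
    [IsProbabilityMeasure P] : IsProbabilityMeasure (proj u P) :=
  Measure.isProbabilityMeasure_map (measurable_projFun u).aemeasurable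

lemma map_prod_eq_compProd (ω P : Measure (Euc d)) [IsProbabilityMeasure ω]
    [IsProbabilityMeasure P] :
    (ω.prod P).map (fun p => (p.1, ⟪p.2, p.1⟫)) = ω ⊗ₘ projKernel P := by
  ext s hs
  have hF : Measurable fun p : Euc d × Euc d => (p.1, ⟪p.2, p.1⟫) :=
    measurable_fst.prodMk measurable_projFun2
  rw [Measure.map_apply hF hs, Measure.compProd_apply hs,
    Measure.prod_apply (hF hs)]
  refine lintegral_congr fun u => ?_
  simp only [projKernel_apply, proj]
  rw [Measure.map_apply (measurable_projFun u) (measurable_prodMk_left hs)]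
  rfl

end ProjKernel
open MeasureTheory ProbabilityTheory Real Set
open scoped ENNReal RealInnerProductSpace

section Slice
variable {Ω : Type*} [MeasurableSpace Ω]

lemma one_le_lintegral_rnDeriv_rpow (P Q : Measure Ω) [IsProbabilityMeasure P]
    [IsProbabilityMeasure Q] (hPQ : P ≪ Q) {α : ℝ} (hα : 1 < α) :
    1 ≤ ∫⁻ x, P.rnDeriv Q x ^ α ∂Q := by
  have h1 : ∫⁻ x, P.rnDeriv Q x ∂Q = 1 := by
    rw [Measure.lintegral_rnDeriv hPQ]; simp
  have hconj : α.HolderConjugate (α / (α - 1)) := Real.HolderConjugate.conjExponent hα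
  have hH := ENNReal.lintegral_mul_le_Lp_mul_Lq Q hconj
    (Measure.measurable_rnDeriv P Q).aemeasurable aemeasurable_const (g := fun _ => 1)
  simp only [mul_one, ENNReal.one_rpow, lintegral_const, measure_univ, one_mul,
    ENNReal.one_rpow] at hH
  simp only [Pi.mul_apply, mul_one] at hH
  rw [h1] at hH
  have h2 : (1 : ℝ≥0∞) ≤ (∫⁻ x, P.rnDeriv Q x ^ α ∂Q) ^ (1 / α) := hH
  have hpos : 0 < 1 / α := by positivity
  by_contra hlt
  push_neg at hlt
  exact absurd h2 (not_le.mpr (ENNReal.rpow_lt_one hlt hpos))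

lemma eexp_ofReal_mul_renyiDiv (P Q : Measure Ω) [IsProbabilityMeasure P]
    [IsProbabilityMeasure Q] (hPQ : P ≪ Q) {α : ℝ} (hα : 1 < α) :
    eexp (ENNReal.ofReal (α - 1) * renyiDiv α P Q) = ∫⁻ x, P.rnDeriv Q x ^ α ∂Q := by
  set I := ∫⁻ x, P.rnDeriv Q x ^ α ∂Q with hI
  have hα1 : (0:ℝ) < α - 1 := sub_pos.mpr hα
  by_cases hItop : I = ∞
  · rw [renyiDiv, if_neg (by rw [← hI]; simp [hItop])]
    rw [ENNReal.mul_top (by simp [ENNReal.ofReal_eq_zero]; linarith)]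
    simp [eexp, hItop]
  · have h1I : 1 ≤ I := one_le_lintegral_rnDeriv_rpow P Q hPQ hα
    have ht : (1:ℝ) ≤ I.toReal := by
      simpa using ENNReal.toReal_mono hItop h1I
    have hlog : 0 ≤ Real.log I.toReal := Real.log_nonneg ht
    rw [renyiDiv, if_pos ⟨hPQ, by rw [← hI]; exact hItop⟩, ← hI]
    rw [← ENNReal.ofReal_mul hα1.le]
    have : (α - 1) * ((α - 1)⁻¹ * Real.log I.toReal) = Real.log I.toReal := by
      field_simp
    rw [this, eexp, if_neg ENNReal.ofReal_ne_top,
      ENNReal.toReal_ofReal hlog, Real.exp_log (by linarith : (0:ℝ) < I.toReal),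
      ENNReal.ofReal_toReal hItop]

lemma measurable_eexp : Measurable eexp := by
  unfold eexp
  refine Measurable.ite (measurableSet_singleton _) measurable_const ?_
  exact (ENNReal.measurable_toReal.exp).ennreal_ofReal

lemma eexp_lt_top_iff {x : ℝ≥0∞} : eexp x < ∞ ↔ x ≠ ∞ := by
  unfold eexp
  split_ifs with h
  · simp [h]
  · simp [h, ENNReal.ofReal_lt_top]

lemma renyiDiv_ne_top_imp {α : ℝ} {P Q : Measure Ω} (h : renyiDiv α P Q ≠ ∞) :
    P ≪ Q ∧ ∫⁻ x, P.rnDeriv Q x ^ α ∂Q ≠ ∞ := by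
  by_contra hc
  rw [renyiDiv, if_neg hc] at h
  exact h rfl

end Slice
open MeasureTheory ProbabilityTheory Real Set
open scoped ENNReal RealInnerProductSpace

section Main
variable {d : ℕ}

lemma renyi_compProd {α : ℝ} (hα : 1 < α) (ω P Q : Measure (Euc d))
    [IsProbabilityMeasure ω] [IsProbabilityMeasure P] [IsProbabilityMeasure Q]
    (hmeas : Measurable fun u : Euc d => renyiDiv α (proj u P) (proj u Q)) :
    renyiDiv α (ω ⊗ₘ projKernel P) (ω ⊗ₘ projKernel Q) = jsd α ω P Q := by
  have hα1 : (0:ℝ) < α - 1 := sub_pos.mpr hα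
  have hne0 : ENNReal.ofReal (α - 1) ≠ 0 := by
    simp only [ne_eq, ENNReal.ofReal_eq_zero, not_le]; linarith
  set κP := projKernel P with hκP
  set κQ := projKernel Q with hκQ
  set Pt := ω ⊗ₘ κP with hPt
  set Qt := ω ⊗ₘ κQ with hQt
  have hRD : Pt.rnDeriv Qt =ᵐ[Qt] fun p => κP.rnDeriv κQ p.1 p.2 :=
    (rnDeriv_compProd_same ω κP κQ).symm
  have hmeasg : Measurable fun p : Euc d × ℝ => κP.rnDeriv κQ p.1 p.2 ^ α :=
    (Kernel.measurable_rnDeriv κP κQ).pow_const α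
  have hJeq : ∫⁻ p, Pt.rnDeriv Qt p ^ α ∂Qt
      = ∫⁻ u, (∫⁻ x, (proj u P).rnDeriv (proj u Q) x ^ α ∂(proj u Q)) ∂ω := by
    rw [lintegral_congr_ae (hRD.mono fun p hp => by rw [hp]), hQt,
      Measure.lintegral_compProd hmeasg]
    refine lintegral_congr fun u => ?_
    have h := Kernel.rnDeriv_eq_rnDeriv_measure (κ := κP) (η := κQ) (a := u)
    refine lintegral_congr_ae (h.mono fun x hx => ?_)
    show κP.rnDeriv κQ u x ^ α = (proj u P).rnDeriv (proj u Q) x ^ α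
    rw [hx]
    rfl
  set f := fun u : Euc d => eexp (ENNReal.ofReal (α - 1) * renyiDiv α (proj u P) (proj u Q))
    with hf
  have hfm : Measurable f := measurable_eexp.comp (hmeas.const_mul _)
  by_cases hAC : ∀ᵐ u ∂ω, proj u P ≪ proj u Q
  · have hACt : Pt ≪ Qt := Measure.AbsolutelyContinuous.compProd_right hAC
    have hfI : ∀ᵐ u ∂ω,
        f u = ∫⁻ x, (proj u P).rnDeriv (proj u Q) x ^ α ∂(proj u Q) :=
      hAC.mono fun u hu => eexp_ofReal_mul_renyiDiv _ _ hu hα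
    have hJf : ∫⁻ u, f u ∂ω = ∫⁻ p, Pt.rnDeriv Qt p ^ α ∂Qt := by
      rw [hJeq, lintegral_congr_ae hfI]
    by_cases hJt : ∫⁻ p, Pt.rnDeriv Qt p ^ α ∂Qt = ∞
    · rw [renyiDiv, if_neg (by rw [hJt]; simp), jsd]
      rw [show (∫⁻ u, eexp (ENNReal.ofReal (α - 1)
          * renyiDiv α (proj u P) (proj u Q)) ∂ω) = ∞ from hJf.trans hJt]
      rw [elog, if_pos rfl, ENNReal.mul_top (by
        simp only [ne_eq, ENNReal.ofReal_eq_zero, not_le]; positivity)]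
    · rw [renyiDiv, if_pos ⟨hACt, hJt⟩, jsd]
      rw [show (∫⁻ u, eexp (ENNReal.ofReal (α - 1)
          * renyiDiv α (proj u P) (proj u Q)) ∂ω)
          = ∫⁻ p, Pt.rnDeriv Qt p ^ α ∂Qt from hJf]
      rw [elog, if_neg hJt, ← ENNReal.ofReal_mul (by positivity)]
  · have hjsd_top : ∫⁻ u, f u ∂ω = ∞ := by
      by_contra hfin
      refine hAC ((ae_lt_top hfm hfin).mono fun u hu => ?_)
      have hx : ENNReal.ofReal (α - 1) * renyiDiv α (proj u P) (proj u Q) ≠ ∞ :=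
        eexp_lt_top_iff.mp hu
      have hr : renyiDiv α (proj u P) (proj u Q) ≠ ∞ := by
        intro h
        exact hx (by rw [h, ENNReal.mul_top hne0])
      exact (renyiDiv_ne_top_imp hr).1
    have hnotAC : ¬ Pt ≪ Qt := fun h => hAC (ae_ac_of_compProd_ac ω κP κQ h)
    rw [renyiDiv, if_neg (fun hc => hnotAC hc.1), jsd]
    rw [show (∫⁻ u, eexp (ENNReal.ofReal (α - 1)
        * renyiDiv α (proj u P) (proj u Q)) ∂ω) = ∞ from hjsd_top]
    rw [elog, if_pos rfl, ENNReal.mul_top (by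
      simp only [ne_eq, ENNReal.ofReal_eq_zero, not_le]; positivity)]

end Main

/-- Joint-SRPP as Rényi divergence of the direction-revealing
projected mechanism, and conversion to approximate indistinguishability:
with `P̃` the law of `(U, ⟨Z, U⟩)` for independent `U ∼ ω`, `Z ∼ P` (and `Q̃`
analogously), one has `D_α(P̃‖Q̃) = JSD_α^ω(P‖Q)`; consequently, if
`JSD_α^ω(P‖Q) ≤ ε`, then `P̃(A) ≤ exp(ε + log(1/δ)/(α-1))·Q̃(A) + δ` for every
measurable `A`. -/
theorem jointSRPP_direction_revealing {d : ℕ} (hd : 1 ≤ d) {α ε δ : ℝ}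
    (hα : 1 < α) (hε : 0 ≤ ε) (hδ0 : 0 < δ) (hδ1 : δ < 1)
    (P Q : Measure (Euc d)) [IsProbabilityMeasure P] [IsProbabilityMeasure Q]
    (ω : Measure (Euc d)) [IsProbabilityMeasure ω] (hsupp : ∀ᵐ u ∂ω, ‖u‖ = 1)
    (hmeas : Measurable fun u : Euc d => renyiDiv α (proj u P) (proj u Q))
    (Pt Qt : Measure (Euc d × ℝ))
    (hPt : Pt = (ω.prod P).map fun p => (p.1, ⟪p.2, p.1⟫))
    (hQt : Qt = (ω.prod Q).map fun p => (p.1, ⟪p.2, p.1⟫)) :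
    renyiDiv α Pt Qt = jsd α ω P Q ∧
    (jsd α ω P Q ≤ ENNReal.ofReal ε →
      ∀ A : Set (Euc d × ℝ), MeasurableSet A →
        Pt A ≤ ENNReal.ofReal (Real.exp (ε + Real.log (1 / δ) / (α - 1))) * Qt A
          + ENNReal.ofReal δ) := by
  have hα1 : (0:ℝ) < α - 1 := sub_pos.mpr hα
  have hPtc : Pt = ω ⊗ₘ projKernel P := hPt.trans (map_prod_eq_compProd ω P)
  have hQtc : Qt = ω ⊗ₘ projKernel Q := hQt.trans (map_prod_eq_compProd ω Q)
  have part1 : renyiDiv α Pt Qt = jsd α ω P Q := by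
    rw [hPtc, hQtc]; exact renyi_compProd hα ω P Q hmeas
  refine ⟨part1, fun hjsd A hA => ?_⟩
  -- probability measures
  have : IsProbabilityMeasure Pt := by rw [hPtc]; infer_instance
  have : IsProbabilityMeasure Qt := by rw [hQtc]; infer_instance
  have : Pt.HaveLebesgueDecomposition Qt := Measure.haveLebesgueDecomposition_of_sigmaFinite Pt Qt
  have h : renyiDiv α Pt Qt ≤ ENNReal.ofReal ε := part1 ▸ hjsd
  have hne : renyiDiv α Pt Qt ≠ ∞ :=
    (lt_of_le_of_lt h ENNReal.ofReal_lt_top).ne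
  obtain ⟨hACt, hJt⟩ := renyiDiv_ne_top_imp hne
  set J := ∫⁻ p, Pt.rnDeriv Qt p ^ α ∂Qt with hJ
  have hval : ENNReal.ofReal ((α - 1)⁻¹ * Real.log J.toReal) ≤ ENNReal.ofReal ε := by
    rw [renyiDiv, if_pos ⟨hACt, hJt⟩] at h; exact h
  have hlogt : (α - 1)⁻¹ * Real.log J.toReal ≤ ε :=
    (ENNReal.ofReal_le_ofReal_iff hε).mp hval
  have hlog2 : Real.log J.toReal ≤ (α - 1) * ε := by
    have h2 := mul_le_mul_of_nonneg_left hlogt hα1.le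
    calc Real.log J.toReal = (α - 1) * ((α - 1)⁻¹ * Real.log J.toReal) := by
          field_simp
      _ ≤ (α - 1) * ε := h2
  have hJle : J ≤ ENNReal.ofReal (Real.exp ((α - 1) * ε)) := by
    rw [← ENNReal.ofReal_toReal hJt]
    apply ENNReal.ofReal_le_ofReal
    rcases le_or_gt J.toReal 0 with h0 | h0
    · exact le_trans h0 (Real.exp_pos _).le
    · calc J.toReal = Real.exp (Real.log J.toReal) := (Real.exp_log h0).symm
        _ ≤ Real.exp ((α - 1) * ε) := Real.exp_le_exp.mpr hlog2
  set c := Real.exp (ε + Real.log (1 / δ) / (α - 1)) with hc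
  have hc0 : 0 < c := Real.exp_pos _
  have hcne : ENNReal.ofReal c ≠ 0 := by simp [hc0]
  have hcT : ENNReal.ofReal c ≠ ∞ := ENNReal.ofReal_ne_top
  set g := Pt.rnDeriv Qt with hg
  have hgm : Measurable g := Pt.measurable_rnDeriv Qt
  set B := {x : Euc d × ℝ | ENNReal.ofReal c < g x} with hB
  have hBm : MeasurableSet B := measurableSet_lt measurable_const hgm
  -- key real computation
  have hreal : c ^ (1 - α) * Real.exp ((α - 1) * ε) = δ := by
    rw [hc, ← Real.exp_mul, ← Real.exp_add]
    have hexp : (ε + Real.log (1 / δ) / (α - 1)) * (1 - α) + (α - 1) * ε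
        = - Real.log (1 / δ) := by
      field_simp
      ring
    rw [hexp, one_div, Real.log_inv, neg_neg, Real.exp_log hδ0]
  -- bound on A \ B
  have key1 : Pt (A \ B) ≤ ENNReal.ofReal c * Qt A := by
    have h1 : Pt (A \ B) = ∫⁻ x in A \ B, g x ∂Qt :=
      (Measure.setLIntegral_rnDeriv hACt _).symm
    have h2 : ∫⁻ x in A \ B, g x ∂Qt ≤ ∫⁻ _ in A \ B, ENNReal.ofReal c ∂Qt := by
      refine lintegral_mono_ae ((ae_restrict_iff' (hA.diff hBm)).mpr
        (ae_of_all _ fun x hx => ?_))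
      exact not_lt.mp hx.2
    rw [h1]
    calc ∫⁻ x in A \ B, g x ∂Qt ≤ ∫⁻ _ in A \ B, ENNReal.ofReal c ∂Qt := h2
      _ = ENNReal.ofReal c * Qt (A \ B) := setLIntegral_const _ _
      _ ≤ ENNReal.ofReal c * Qt A := mul_le_mul_right (measure_mono diff_subset) _
  -- bound on A ∩ B
  have hpt : ∀ x ∈ B, g x ≤ ENNReal.ofReal c ^ (1 - α) * g x ^ α := by
    intro x hx
    have hy : ENNReal.ofReal c < g x := hx
    have hcpow0 : ENNReal.ofReal c ^ (1 - α) ≠ 0 :=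
      (ENNReal.rpow_pos (ENNReal.ofReal_pos.mpr hc0) hcT).ne'
    by_cases hgx : g x = ∞
    · rw [hgx, ENNReal.top_rpow_of_pos (by linarith : (0:ℝ) < α),
        ENNReal.mul_top hcpow0]
    · have hgxne0 : g x ≠ 0 := fun h => by simp [h] at hy
      have h1 : ENNReal.ofReal c ^ (α - 1) * g x ≤ g x ^ (α - 1) * g x :=
        mul_le_mul_left (ENNReal.rpow_le_rpow hy.le (by linarith)) _
      have h2 : g x ^ (α - 1) * g x = g x ^ α := by
        have h2' := ENNReal.rpow_add (α - 1) 1 hgxne0 hgx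
        rw [ENNReal.rpow_one] at h2'
        rw [← h2']
        norm_num
      have h3 : g x = ENNReal.ofReal c ^ (1 - α) * (ENNReal.ofReal c ^ (α - 1) * g x) := by
        rw [← mul_assoc, ← ENNReal.rpow_add _ _ hcne hcT]
        norm_num
      calc g x = ENNReal.ofReal c ^ (1 - α) * (ENNReal.ofReal c ^ (α - 1) * g x) := h3
        _ ≤ ENNReal.ofReal c ^ (1 - α) * (g x ^ (α - 1) * g x) := mul_le_mul_right h1 _
        _ = ENNReal.ofReal c ^ (1 - α) * g x ^ α := by rw [h2]
  have key2 : Pt (A ∩ B) ≤ ENNReal.ofReal δ := by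
    have h1 : Pt (A ∩ B) ≤ Pt B := measure_mono inter_subset_right
    have h2 : Pt B = ∫⁻ x in B, g x ∂Qt := (Measure.setLIntegral_rnDeriv hACt _).symm
    have h3 : ∫⁻ x in B, g x ∂Qt ≤ ∫⁻ x in B, ENNReal.ofReal c ^ (1 - α) * g x ^ α ∂Qt :=
      lintegral_mono_ae ((ae_restrict_iff' hBm).mpr (ae_of_all _ hpt))
    have h4 : ∫⁻ x in B, ENNReal.ofReal c ^ (1 - α) * g x ^ α ∂Qt
        = ENNReal.ofReal c ^ (1 - α) * ∫⁻ x in B, g x ^ α ∂Qt :=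
      lintegral_const_mul _ (hgm.pow_const α)
    have h5 : ENNReal.ofReal c ^ (1 - α) * ∫⁻ x in B, g x ^ α ∂Qt
        ≤ ENNReal.ofReal c ^ (1 - α) * ENNReal.ofReal (Real.exp ((α - 1) * ε)) :=
      mul_le_mul_right (le_trans (setLIntegral_le_lintegral _ _) hJle) _
    have h6 : ENNReal.ofReal c ^ (1 - α) * ENNReal.ofReal (Real.exp ((α - 1) * ε))
        = ENNReal.ofReal δ := by
      rw [ENNReal.ofReal_rpow_of_pos hc0,
        ← ENNReal.ofReal_mul (Real.rpow_nonneg hc0.le _), hreal]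
    calc Pt (A ∩ B) ≤ Pt B := h1
      _ = ∫⁻ x in B, g x ∂Qt := h2
      _ ≤ ∫⁻ x in B, ENNReal.ofReal c ^ (1 - α) * g x ^ α ∂Qt := h3
      _ = ENNReal.ofReal c ^ (1 - α) * ∫⁻ x in B, g x ^ α ∂Qt := h4
      _ ≤ ENNReal.ofReal c ^ (1 - α) * ENNReal.ofReal (Real.exp ((α - 1) * ε)) := h5
      _ = ENNReal.ofReal δ := h6
  calc Pt A = Pt (A ∩ B) + Pt (A \ B) := (measure_inter_add_diff A hBm).symm
    _ ≤ ENNReal.ofReal δ + ENNReal.ofReal c * Qt A := add_le_add key2 key1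
    _ = ENNReal.ofReal c * Qt A + ENNReal.ofReal δ := add_comm _ _
end

section
/- Let n ≥ 1 and let a_1,…,a_n and b_1,…,b_n be real numbers, with order statistics a_(1) ≤ … ≤ a_(n) and b_(1) ≤ … ≤ b_(n). Let P̂ = (1/n)·∑_{k=1}^n δ_{a_k} and Q̂ = (1/n)·∑_{k=1}^n δ_{b_k} be the corresponding empirical probability measures on ℝ. Then W_∞(P̂, Q̂) = max_{1 ≤ k ≤ n} |a_(k) − b_(k)|, where W_∞ is the ∞-Wasserstein distance with respect to the absolute-value metric on ℝ. -/
open MeasureTheory ProbabilityTheory Real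
open scoped ENNReal NNReal RealInnerProductSpace BigOperators

lemma emp_apply {n : ℕ} (a : Fin n → ℝ) (s : Set ℝ) :
    (((n : ℝ≥0∞)⁻¹ • ∑ k, Measure.dirac (a k)) : Measure ℝ) s
      = (n : ℝ≥0∞)⁻¹ * ∑ k, s.indicator 1 (a k) := by
  simp [Measure.finset_sum_apply, Measure.dirac_apply]

lemma lower_aux {n : ℕ} (A B : Fin n → ℝ) (hA : Monotone A) (hB : Monotone B)
    (pp : Measure (ℝ × ℝ))
    (h1 : pp.map Prod.fst = (n : ℝ≥0∞)⁻¹ • ∑ k, Measure.dirac (A k))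
    (h2 : pp.map Prod.snd = (n : ℝ≥0∞)⁻¹ • ∑ k, Measure.dirac (B k))
    (k : Fin n) (hk : B k ≤ A k) :
    edist (A k) (B k) ≤ essSup (fun p : ℝ × ℝ => edist p.1 p.2) pp := by
  set t := essSup (fun p : ℝ × ℝ => edist p.1 p.2) pp with ht
  by_contra hlt
  push_neg at hlt
  have htne : t ≠ ∞ := (hlt.trans (edist_lt_top _ _)).ne
  set tr := t.toReal with htr
  have hkey : tr < A k - B k := by
    have : t < ENNReal.ofReal (dist (A k) (B k)) := by rwa [← edist_dist]
    have := (ENNReal.lt_ofReal_iff_toReal_lt htne).mp this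
    rwa [Real.dist_eq, abs_of_nonneg (by linarith)] at this
  -- full measure set
  set G : Set (ℝ × ℝ) := {p | edist p.1 p.2 ≤ t} with hGdef
  have hG : pp Gᶜ = 0 := by
    have h := ae_le_essSup (μ := pp) (f := fun p : ℝ × ℝ => edist p.1 p.2)
    rw [ae_iff] at h
    exact h
  have hsub : (Prod.fst ⁻¹' Set.Ici (A k)) ∩ G ⊆ Prod.snd ⁻¹' Set.Ioi (B k) := by
    rintro ⟨x, y⟩ ⟨hx, hg⟩
    simp only [Set.mem_preimage, Set.mem_Ici] at hx
    have hd : dist x y ≤ tr := by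
      have : edist x y ≤ ENNReal.ofReal tr := by
        rwa [htr, ENNReal.ofReal_toReal htne]
      rw [edist_dist] at this
      exact (ENNReal.ofReal_le_ofReal_iff ENNReal.toReal_nonneg).mp this
    have : x - y ≤ tr := (le_abs_self _).trans (by rwa [Real.dist_eq] at hd)
    simp only [Set.mem_preimage, Set.mem_Ioi]
    linarith
  have hchain : (pp.map Prod.fst) (Set.Ici (A k)) ≤ (pp.map Prod.snd) (Set.Ioi (B k)) := by
    rw [Measure.map_apply measurable_fst measurableSet_Ici,
        Measure.map_apply measurable_snd measurableSet_Ioi]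
    calc pp (Prod.fst ⁻¹' Set.Ici (A k))
        ≤ pp ((Prod.fst ⁻¹' Set.Ici (A k) ∩ G) ∪ Gᶜ) := by
          apply measure_mono; intro p hp
          by_cases hpG : p ∈ G
          · exact Or.inl ⟨hp, hpG⟩
          · exact Or.inr hpG
      _ ≤ pp (Prod.fst ⁻¹' Set.Ici (A k) ∩ G) + pp Gᶜ := measure_union_le _ _
      _ = pp (Prod.fst ⁻¹' Set.Ici (A k) ∩ G) := by rw [hG, add_zero]
      _ ≤ pp (Prod.snd ⁻¹' Set.Ioi (B k)) := measure_mono hsub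
  rw [h1, h2, emp_apply, emp_apply] at hchain
  have hposn : 0 < n := k.pos
  have hc1 : ((n - k.val : ℕ) : ℝ≥0∞) ≤ ∑ j, (Set.Ici (A k)).indicator 1 (A j) := by
    calc ((n - k.val : ℕ) : ℝ≥0∞) = ∑ j ∈ Finset.Ici k, (1 : ℝ≥0∞) := by
          rw [Finset.sum_const, Fin.card_Ici]; simp
      _ = ∑ j ∈ Finset.Ici k, (Set.Ici (A k)).indicator 1 (A j) := by
          apply Finset.sum_congr rfl
          intro j hj
          rw [Set.indicator_of_mem (Set.mem_Ici.mpr (hA (Finset.mem_Ici.mp hj)))]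
          rfl
      _ ≤ ∑ j, (Set.Ici (A k)).indicator 1 (A j) :=
          Finset.sum_le_sum_of_subset (Finset.subset_univ _)
  have hc2 : ∑ j, (Set.Ioi (B k)).indicator 1 (B j) ≤ ((n - 1 - k.val : ℕ) : ℝ≥0∞) := by
    calc ∑ j, (Set.Ioi (B k)).indicator 1 (B j)
        ≤ ∑ j, (if j ∈ Finset.Ioi k then (1 : ℝ≥0∞) else 0) := by
          apply Finset.sum_le_sum
          intro j _
          by_cases hj : j ∈ Finset.Ioi k
          · simp only [hj, if_true]
            exact Set.indicator_le_self' (fun _ _ => zero_le_one) _ |>.trans le_rfl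
          · have hjk : j ≤ k := le_of_not_gt (fun h => hj (Finset.mem_Ioi.mpr h))
            rw [Set.indicator_of_notMem (by simp [Set.mem_Ioi]; exact hB hjk), if_neg hj]
      _ = ((n - 1 - k.val : ℕ) : ℝ≥0∞) := by
          rw [Finset.sum_ite_mem, Finset.univ_inter, Finset.sum_const, Fin.card_Ioi]; simp
  have hmul : ((n : ℝ≥0∞))⁻¹ * ((n - k.val : ℕ) : ℝ≥0∞)
      ≤ ((n : ℝ≥0∞))⁻¹ * ((n - 1 - k.val : ℕ) : ℝ≥0∞) :=
    le_trans (mul_le_mul_right hc1 _) (le_trans hchain (mul_le_mul_right hc2 _))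
  have hinv0 : ((n : ℝ≥0∞))⁻¹ ≠ 0 := ENNReal.inv_ne_zero.mpr (ENNReal.natCast_ne_top n)
  have hinvt : ((n : ℝ≥0∞))⁻¹ ≠ ∞ := by
    simp [ENNReal.inv_ne_top]; exact hposn.ne'
  have := (ENNReal.mul_le_mul_iff_right hinv0 hinvt).mp hmul
  have hnat : n - k.val ≤ n - 1 - k.val := Nat.cast_le.mp this
  have hkn : k.val < n := k.isLt
  omega

/-- one-dimensional empirical `∞`-Wasserstein distance:
for empirical measures on `n` real points, `W_∞` equals the maximal distance
between corresponding order statistics. -/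
theorem wInf_empirical_one_dim {n : ℕ} (hn : 1 ≤ n) (a b : Fin n → ℝ) :
    wInf ((n : ℝ≥0∞)⁻¹ • ∑ k, Measure.dirac (a k))
        ((n : ℝ≥0∞)⁻¹ • ∑ k, Measure.dirac (b k)) =
      ⨆ k : Fin n, edist (a (Tuple.sort a k)) (b (Tuple.sort b k)) := by
  set σa := Tuple.sort a with hσa
  set σb := Tuple.sort b with hσb
  set A : Fin n → ℝ := a ∘ σa with hA
  set B : Fin n → ℝ := b ∘ σb with hB
  have hAm : Monotone A := Tuple.monotone_sort a
  have hBm : Monotone B := Tuple.monotone_sort b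
  have hreA : (∑ k, Measure.dirac (A k)) = ∑ k, Measure.dirac (a k) :=
    Equiv.sum_comp σa (fun i => Measure.dirac (a i))
  have hreB : (∑ k, Measure.dirac (B k)) = ∑ k, Measure.dirac (b k) :=
    Equiv.sum_comp σb (fun i => Measure.dirac (b i))
  have hgoal : (⨆ k : Fin n, edist (a (Tuple.sort a k)) (b (Tuple.sort b k)))
      = ⨆ k : Fin n, edist (A k) (B k) := rfl
  rw [hgoal]
  set c := ⨆ k : Fin n, edist (A k) (B k) with hc
  apply le_antisymm
  · -- upper bound via the monotone coupling
    set cpl : Measure (ℝ × ℝ) := (n : ℝ≥0∞)⁻¹ • ∑ k, Measure.dirac (A k, B k) with hcpl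
    have happly : ∀ s : Set (ℝ × ℝ),
        cpl s = (n : ℝ≥0∞)⁻¹ * ∑ k, s.indicator 1 (A k, B k) := by
      intro s
      simp [hcpl, Measure.finset_sum_apply, Measure.dirac_apply]
    have hm1 : cpl.map Prod.fst = (n : ℝ≥0∞)⁻¹ • ∑ k, Measure.dirac (a k) := by
      rw [← hreA]
      ext s hs
      rw [Measure.map_apply measurable_fst hs, happly, emp_apply]
      refine congrArg _ (Finset.sum_congr rfl fun j _ => ?_)
      by_cases h : A j ∈ s <;> simp [Set.indicator_apply, h]
    have hm2 : cpl.map Prod.snd = (n : ℝ≥0∞)⁻¹ • ∑ k, Measure.dirac (b k) := by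
      rw [← hreB]
      ext s hs
      rw [Measure.map_apply measurable_snd hs, happly, emp_apply]
      refine congrArg _ (Finset.sum_congr rfl fun j _ => ?_)
      by_cases h : B j ∈ s <;> simp [Set.indicator_apply, h]
    have hess : essSup (fun p : ℝ × ℝ => edist p.1 p.2) cpl ≤ c := by
      apply essSup_le_of_ae_le (hfbdd := by isBoundedDefault)
      rw [Filter.EventuallyLE, ae_iff]
      have : {p : ℝ × ℝ | ¬ edist p.1 p.2 ≤ c} = {p : ℝ × ℝ | c < edist p.1 p.2} := by
        ext p; simp [not_le]
      rw [this, happly]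
      have hzero : ∀ k : Fin n,
          ({p : ℝ × ℝ | c < edist p.1 p.2}).indicator (1 : ℝ × ℝ → ℝ≥0∞) (A k, B k) = 0 := by
        intro k
        apply Set.indicator_of_notMem
        simp only [Set.mem_setOf_eq, not_lt]
        exact le_iSup (fun k : Fin n => edist (A k) (B k)) k
      rw [Finset.sum_congr rfl (fun k _ => hzero k)]
      simp
    calc wInf ((n : ℝ≥0∞)⁻¹ • ∑ k, Measure.dirac (a k))
          ((n : ℝ≥0∞)⁻¹ • ∑ k, Measure.dirac (b k))
        ≤ essSup (fun p : ℝ × ℝ => edist p.1 p.2) cpl := iInf₂_le cpl ⟨hm1, hm2⟩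
      _ ≤ c := hess
  · -- lower bound
    apply le_iInf
    intro cpl
    apply le_iInf
    rintro ⟨hm1, hm2⟩
    apply iSup_le
    intro k
    have hm1' : cpl.map Prod.fst = (n : ℝ≥0∞)⁻¹ • ∑ j, Measure.dirac (A j) := by
      rw [hm1, hreA]
    have hm2' : cpl.map Prod.snd = (n : ℝ≥0∞)⁻¹ • ∑ j, Measure.dirac (B j) := by
      rw [hm2, hreB]
    rcases le_total (B k) (A k) with hle | hle
    · exact lower_aux A B hAm hBm cpl hm1' hm2' k hle
    · -- swap the coupling
      set cpl' : Measure (ℝ × ℝ) := cpl.map Prod.swap with hcpl'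
      have hs1 : cpl'.map Prod.fst = (n : ℝ≥0∞)⁻¹ • ∑ j, Measure.dirac (B j) := by
        rw [hcpl', Measure.map_map measurable_fst measurable_swap]
        exact hm2'
      have hs2 : cpl'.map Prod.snd = (n : ℝ≥0∞)⁻¹ • ∑ j, Measure.dirac (A j) := by
        rw [hcpl', Measure.map_map measurable_snd measurable_swap]
        exact hm1'
      have hswap : essSup (fun p : ℝ × ℝ => edist p.1 p.2) cpl'
          = essSup (fun p : ℝ × ℝ => edist p.1 p.2) cpl := by
        rw [hcpl', essSup_map_measure
          (measurable_fst.edist measurable_snd).aemeasurable measurable_swap.aemeasurable]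
        congr 1
        funext p
        exact edist_comm p.2 p.1
      rw [edist_comm]
      calc edist (B k) (A k) ≤ essSup (fun p : ℝ × ℝ => edist p.1 p.2) cpl' :=
            lower_aux B A hBm hAm cpl' hs1 hs2 k hle
        _ = _ := hswap
end
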